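/- arXiv:1605.05109 — 9 statements merged into one kernel-verified Lean document; each statement's English description precedes it below -/
import Mathlib

section
/- In the diameter gadget graph D_k, for all 0 ≤ i, j ≤ k−1 with i ≠ j one has d(ℓ_i, r_j) = 3, and for all 0 ≤ i ≤ k−1 one has d(ℓ_i, r_i) = 5. -/
/-!
Statement 0: In the diameter gadget graph `D_k` (with `k = 2^m`, `m ≥ 1`),
for all `0 ≤ i, j ≤ k−1` with `i ≠ j` one has `d(ℓ_i, r_j) = 3`, and
for all `0 ≤ i ≤ k−1` one has `d(ℓ_i, r_i) = 5`.
-/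

namespace DiamGadget

/-- Vertices of the diameter gadget graph `D_k`, `k = 2^m`. -/
inductive V (m : ℕ) : Type
  | L : Fin (2 ^ m) → V m
  | R : Fin (2 ^ m) → V m
  | lk : V m
  | lk1 : V m
  | rk : V m
  | rk1 : V m
  | F : Fin m → V m
  | T : Fin m → V m
  | F' : Fin m → V m
  | T' : Fin m → V m
  | a : V m
  | b : V m

open V

/-- One direction of the edge relation of `D_k`. -/
def rel (m : ℕ) : V m → V m → Prop
  | L _, lk => True
  | R _, rk => True
  | lk, lk1 => True
  | rk, rk1 => True
  | lk1, rk1 => True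
  | F j, T' j' => j = j'
  | T j, F' j' => j = j'
  | L i, F j => Nat.testBit i.val j.val = false
  | L i, T j => Nat.testBit i.val j.val = true
  | R i, F' j => Nat.testBit i.val j.val = false
  | R i, T' j => Nat.testBit i.val j.val = true
  | a, F _ => True
  | a, T _ => True
  | a, lk => True
  | a, lk1 => True
  | b, F' _ => True
  | b, T' _ => True
  | b, rk => True
  | b, rk1 => True
  | a, b => True
  | _, _ => False

/-- The diameter gadget graph `D_k`. -/
def G (m : ℕ) : SimpleGraph (V m) := SimpleGraph.fromRel (rel m)

/-- The (truncated) distance-from-`ℓ_i` potential function. -/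
def f (m : ℕ) (i : Fin (2 ^ m)) : V m → ℕ
  | L j => if j = i then 0 else 2
  | R j => if j = i then 5 else 3
  | lk => 1
  | lk1 => 2
  | rk => 4
  | rk1 => 3
  | F p => if Nat.testBit i.val p.val then 3 else 1
  | T p => if Nat.testBit i.val p.val then 1 else 3
  | F' p => if Nat.testBit i.val p.val then 2 else 4
  | T' p => if Nat.testBit i.val p.val then 4 else 2
  | V.a => 2
  | V.b => 3

lemma f_lip_rel (m : ℕ) (i : Fin (2 ^ m)) :
    ∀ u v, rel m u v → f m i u ≤ f m i v + 1 ∧ f m i v ≤ f m i u + 1 := by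
  intro u v h
  cases u <;> cases v <;> simp only [rel] at h <;>
    simp only [f] <;> try subst h
  all_goals first
    | omega
    | (split_ifs <;> first | omega | simp_all)

lemma f_adj (m : ℕ) (i : Fin (2 ^ m)) {u v : V m} (h : (G m).Adj u v) :
    f m i v ≤ f m i u + 1 := by
  rw [G, SimpleGraph.fromRel_adj] at h
  rcases h.2 with h' | h'
  · exact (f_lip_rel m i u v h').2
  · exact (f_lip_rel m i v u h').1

lemma f_walk (m : ℕ) (i : Fin (2 ^ m)) {u v : V m} (p : (G m).Walk u v) :
    f m i v ≤ f m i u + p.length := by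
  induction p with
  | nil => simp
  | cons h q ih =>
    have := f_adj m i h
    simp only [SimpleGraph.Walk.length_cons]
    omega

lemma adj_of_rel {m : ℕ} {u v : V m} (hne : u ≠ v) (h : rel m u v) : (G m).Adj u v := by
  rw [G, SimpleGraph.fromRel_adj]
  exact ⟨hne, Or.inl h⟩

lemma adj_of_rel' {m : ℕ} {u v : V m} (hne : u ≠ v) (h : rel m v u) : (G m).Adj u v := by
  rw [G, SimpleGraph.fromRel_adj]
  exact ⟨hne, Or.inr h⟩

theorem statement0 (m : ℕ) (hm : 1 ≤ m) :
    (∀ i j : Fin (2 ^ m), i ≠ j → (G m).dist (L i) (R j) = 3) ∧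
    (∀ i : Fin (2 ^ m), (G m).dist (L i) (R i) = 5) := by
  constructor
  · intro i j hij
    -- find a bit where i and j differ
    have hv : i.val ≠ j.val := fun hv => hij (Fin.ext hv)
    have hp : ∃ p, Nat.testBit i.val p ≠ Nat.testBit j.val p := by
      by_contra hc
      push_neg at hc
      exact hv (Nat.eq_of_testBit_eq hc)
    obtain ⟨p, hp⟩ := hp
    have hplt : p < m := by
      by_contra hlt
      push_neg at hlt
      have h1 : Nat.testBit i.val p = false :=
        Nat.testBit_eq_false_of_lt (lt_of_lt_of_le i.isLt (Nat.pow_le_pow_right (by norm_num) hlt))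
      have h2 : Nat.testBit j.val p = false :=
        Nat.testBit_eq_false_of_lt (lt_of_lt_of_le j.isLt (Nat.pow_le_pow_right (by norm_num) hlt))
      rw [h1, h2] at hp; exact hp rfl
    set q : Fin m := ⟨p, hplt⟩
    -- upper bound : a walk of length 3
    have hw3 : ∃ w : (G m).Walk (L i) (R j), w.length = 3 := by
      cases hbi : Nat.testBit i.val p
      · have hbj : Nat.testBit j.val p = true := by
          cases hbj : Nat.testBit j.val p
          · rw [hbi, hbj] at hp; exact absurd rfl hp
          · rfl
        have e1 : (G m).Adj (L i) (F q) := adj_of_rel (by simp) hbi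
        have e2 : (G m).Adj (F q) (T' q) := adj_of_rel (by simp) rfl
        have e3 : (G m).Adj (T' q) (R j) := adj_of_rel' (by simp) hbj
        exact ⟨.cons e1 (.cons e2 (.cons e3 .nil)), rfl⟩
      · have hbj : Nat.testBit j.val p = false := by
          cases hbj : Nat.testBit j.val p
          · rfl
          · rw [hbi, hbj] at hp; exact absurd rfl hp
        have e1 : (G m).Adj (L i) (T q) := adj_of_rel (by simp) hbi
        have e2 : (G m).Adj (T q) (F' q) := adj_of_rel (by simp) rfl
        have e3 : (G m).Adj (F' q) (R j) := adj_of_rel' (by simp) hbj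
        exact ⟨.cons e1 (.cons e2 (.cons e3 .nil)), rfl⟩
    obtain ⟨w0, hw0⟩ := hw3
    have hupper : (G m).dist (L i) (R j) ≤ 3 := hw0 ▸ SimpleGraph.dist_le w0
    have hreach : (G m).Reachable (L i) (R j) := w0.reachable
    obtain ⟨w, hw⟩ := hreach.exists_walk_length_eq_dist
    have hlow := f_walk m i w
    rw [hw] at hlow
    simp [f, Ne.symm hij] at hlow
    omega
  · intro i
    have e1 : (G m).Adj (L i) lk := adj_of_rel (by simp) trivial
    have e2 : (G m).Adj (lk : V m) lk1 := adj_of_rel (by simp) trivial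
    have e3 : (G m).Adj (lk1 : V m) rk1 := adj_of_rel (by simp) trivial
    have e4 : (G m).Adj (rk1 : V m) rk := adj_of_rel' (by simp) trivial
    have e5 : (G m).Adj (rk : V m) (R i) := adj_of_rel' (by simp) trivial
    have hw5 : ∃ w : (G m).Walk (L i) (R i), w.length = 5 :=
      ⟨.cons e1 (.cons e2 (.cons e3 (.cons e4 (.cons e5 .nil)))), rfl⟩
    obtain ⟨w0, hw0⟩ := hw5
    have hupper : (G m).dist (L i) (R i) ≤ 5 := hw0 ▸ SimpleGraph.dist_le w0
    obtain ⟨w', hw'⟩ := w0.reachable.exists_walk_length_eq_dist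
    have hlow := f_walk m i w'
    rw [hw'] at hlow
    simp [f] at hlow
    omega

end DiamGadget
end

section
/- In the diameter gadget graph D_k, for every pair of vertices u, v such that u ∈ F ∪ T ∪ {ℓ_k, ℓ_{k+1}, a} or v ∈ F′ ∪ T′ ∪ {r_k, r_{k+1}, b}, one has d(u, v) ≤ 4. -/
/-!
Statement 2: In the diameter gadget graph `D_k`, for every pair of vertices
`u, v` such that `u ∈ F ∪ T ∪ {ℓ_k, ℓ_{k+1}, a}` or `v ∈ F′ ∪ T′ ∪ {r_k, r_{k+1}, b}`,
one has `d(u, v) ≤ 4`.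
-/


namespace DiamGadget

open V

/-- Membership in `F ∪ T ∪ {ℓ_k, ℓ_{k+1}, a}`. -/
def inAside {m : ℕ} : V m → Prop
  | F _ => True
  | T _ => True
  | lk => True
  | lk1 => True
  | a => True
  | _ => False

/-- Membership in `F′ ∪ T′ ∪ {r_k, r_{k+1}, b}`. -/
def inBside {m : ℕ} : V m → Prop
  | F' _ => True
  | T' _ => True
  | rk => True
  | rk1 => True
  | b => True
  | _ => False



open SimpleGraph Walk

private lemma adjE {m : ℕ} {x y : V m} (hne : x ≠ y) (h : rel m x y ∨ rel m y x) :
    (G m).Adj x y := by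
  rw [G, SimpleGraph.fromRel_adj]; exact ⟨hne, h⟩

variable {m : ℕ}

private lemma adj_ab : (G m).Adj V.a V.b := adjE nofun (.inl trivial)
private lemma adj_aF (j : Fin m) : (G m).Adj V.a (V.F j) := adjE nofun (.inl trivial)
private lemma adj_aT (j : Fin m) : (G m).Adj V.a (V.T j) := adjE nofun (.inl trivial)
private lemma adj_alk : (G m).Adj V.a V.lk := adjE nofun (.inl trivial)
private lemma adj_alk1 : (G m).Adj V.a V.lk1 := adjE nofun (.inl trivial)
private lemma adj_bF' (j : Fin m) : (G m).Adj V.b (V.F' j) := adjE nofun (.inl trivial)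
private lemma adj_bT' (j : Fin m) : (G m).Adj V.b (V.T' j) := adjE nofun (.inl trivial)
private lemma adj_brk : (G m).Adj V.b V.rk := adjE nofun (.inl trivial)
private lemma adj_brk1 : (G m).Adj V.b V.rk1 := adjE nofun (.inl trivial)
private lemma adj_FL {i : Fin (2 ^ m)} {j : Fin m} (h : Nat.testBit i.val j.val = false) :
    (G m).Adj (V.F j) (V.L i) := adjE nofun (.inr h)
private lemma adj_TL {i : Fin (2 ^ m)} {j : Fin m} (h : Nat.testBit i.val j.val = true) :
    (G m).Adj (V.T j) (V.L i) := adjE nofun (.inr h)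
private lemma adj_F'R {i : Fin (2 ^ m)} {j : Fin m} (h : Nat.testBit i.val j.val = false) :
    (G m).Adj (V.F' j) (V.R i) := adjE nofun (.inr h)
private lemma adj_T'R {i : Fin (2 ^ m)} {j : Fin m} (h : Nat.testBit i.val j.val = true) :
    (G m).Adj (V.T' j) (V.R i) := adjE nofun (.inr h)

/-- Every vertex is within distance 3 of `a`. -/
lemma walkA (hm : 1 ≤ m) (v : V m) :
    ∃ p : (G m).Walk V.a v, p.length ≤ 3 := by
  cases v with
  | a => exact ⟨.nil, by simp⟩
  | b => exact ⟨.cons adj_ab .nil, by simp⟩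
  | F j => exact ⟨.cons (adj_aF j) .nil, by simp⟩
  | T j => exact ⟨.cons (adj_aT j) .nil, by simp⟩
  | lk => exact ⟨.cons adj_alk .nil, by simp⟩
  | lk1 => exact ⟨.cons adj_alk1 .nil, by simp⟩
  | F' j => exact ⟨.cons adj_ab (.cons (adj_bF' j) .nil), by simp⟩
  | T' j => exact ⟨.cons adj_ab (.cons (adj_bT' j) .nil), by simp⟩
  | rk => exact ⟨.cons adj_ab (.cons adj_brk .nil), by simp⟩
  | rk1 => exact ⟨.cons adj_ab (.cons adj_brk1 .nil), by simp⟩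
  | L i =>
      cases hb : Nat.testBit i.val 0 with
      | false => exact ⟨.cons (adj_aF ⟨0, hm⟩) (.cons (adj_FL hb) .nil), by simp⟩
      | true => exact ⟨.cons (adj_aT ⟨0, hm⟩) (.cons (adj_TL hb) .nil), by simp⟩
  | R i =>
      cases hb : Nat.testBit i.val 0 with
      | false =>
          exact ⟨.cons adj_ab (.cons (adj_bF' ⟨0, hm⟩) (.cons (adj_F'R hb) .nil)), by simp⟩
      | true =>
          exact ⟨.cons adj_ab (.cons (adj_bT' ⟨0, hm⟩) (.cons (adj_T'R hb) .nil)), by simp⟩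

/-- Every vertex is within distance 3 of `b`. -/
lemma walkB (hm : 1 ≤ m) (v : V m) :
    ∃ p : (G m).Walk V.b v, p.length ≤ 3 := by
  cases v with
  | b => exact ⟨.nil, by simp⟩
  | a => exact ⟨.cons adj_ab.symm .nil, by simp⟩
  | F' j => exact ⟨.cons (adj_bF' j) .nil, by simp⟩
  | T' j => exact ⟨.cons (adj_bT' j) .nil, by simp⟩
  | rk => exact ⟨.cons adj_brk .nil, by simp⟩
  | rk1 => exact ⟨.cons adj_brk1 .nil, by simp⟩
  | F j => exact ⟨.cons adj_ab.symm (.cons (adj_aF j) .nil), by simp⟩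
  | T j => exact ⟨.cons adj_ab.symm (.cons (adj_aT j) .nil), by simp⟩
  | lk => exact ⟨.cons adj_ab.symm (.cons adj_alk .nil), by simp⟩
  | lk1 => exact ⟨.cons adj_ab.symm (.cons adj_alk1 .nil), by simp⟩
  | R i =>
      cases hb : Nat.testBit i.val 0 with
      | false => exact ⟨.cons (adj_bF' ⟨0, hm⟩) (.cons (adj_F'R hb) .nil), by simp⟩
      | true => exact ⟨.cons (adj_bT' ⟨0, hm⟩) (.cons (adj_T'R hb) .nil), by simp⟩
  | L i =>
      cases hb : Nat.testBit i.val 0 with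
      | false =>
          exact ⟨.cons adj_ab.symm (.cons (adj_aF ⟨0, hm⟩) (.cons (adj_FL hb) .nil)), by simp⟩
      | true =>
          exact ⟨.cons adj_ab.symm (.cons (adj_aT ⟨0, hm⟩) (.cons (adj_TL hb) .nil)), by simp⟩

lemma walkSideA {u : V m} (h : inAside u) :
    ∃ p : (G m).Walk u V.a, p.length ≤ 1 := by
  cases u with
  | a => exact ⟨.nil, by simp⟩
  | F j => exact ⟨.cons (adj_aF j).symm .nil, by simp⟩
  | T j => exact ⟨.cons (adj_aT j).symm .nil, by simp⟩
  | lk => exact ⟨.cons adj_alk.symm .nil, by simp⟩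
  | lk1 => exact ⟨.cons adj_alk1.symm .nil, by simp⟩
  | L i => exact h.elim
  | R i => exact h.elim
  | rk => exact h.elim
  | rk1 => exact h.elim
  | F' j => exact h.elim
  | T' j => exact h.elim
  | b => exact h.elim

lemma walkSideB {v : V m} (h : inBside v) :
    ∃ p : (G m).Walk V.b v, p.length ≤ 1 := by
  cases v with
  | b => exact ⟨.nil, by simp⟩
  | F' j => exact ⟨.cons (adj_bF' j) .nil, by simp⟩
  | T' j => exact ⟨.cons (adj_bT' j) .nil, by simp⟩
  | rk => exact ⟨.cons adj_brk .nil, by simp⟩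
  | rk1 => exact ⟨.cons adj_brk1 .nil, by simp⟩
  | L i => exact h.elim
  | R i => exact h.elim
  | lk => exact h.elim
  | lk1 => exact h.elim
  | F j => exact h.elim
  | T j => exact h.elim
  | a => exact h.elim

theorem statement2 (m : ℕ) (hm : 1 ≤ m) :
    ∀ u v : V m, inAside u ∨ inBside v → (G m).dist u v ≤ 4 := by
  intro u v h
  rcases h with h | h
  · obtain ⟨p, hp⟩ := walkSideA h
    obtain ⟨q, hq⟩ := walkA hm v
    have := SimpleGraph.dist_le (p.append q)
    rw [Walk.length_append] at this
    omega
  · obtain ⟨q, hq⟩ := walkB hm u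
    obtain ⟨p, hp⟩ := walkSideB h
    have := SimpleGraph.dist_le (q.reverse.append p)
    rw [Walk.length_append, Walk.length_reverse] at this
    omega


end DiamGadget
end

section
/- In the graph D_k(S_a, S_b), for every pair of vertices u, v ∈ V_a := L ∪ F ∪ T ∪ {ℓ_k, ℓ_{k+1}, a} one has d(u, v) ≤ 4, and for every pair of vertices u, v ∈ V_b := R ∪ F′ ∪ T′ ∪ {r_k, r_{k+1}, b} one has d(u, v) ≤ 4. -/
/-!
Statement 3: In the graph `D_k(S_a, S_b)`, for every pair of vertices
`u, v ∈ V_a := L ∪ F ∪ T ∪ {ℓ_k, ℓ_{k+1}, a}` one has `d(u, v) ≤ 4`, and for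
every pair of vertices `u, v ∈ V_b := R ∪ F′ ∪ T′ ∪ {r_k, r_{k+1}, b}` one has
`d(u, v) ≤ 4`.
-/


namespace DiamGadget

open V

/-- Extra edges depending on the input strings: `ℓ_i–ℓ_{k+1}` when `S_a(i) = 0`
and `r_i–r_{k+1}` when `S_b(i) = 0`. -/
def extraRel (m : ℕ) (Sa Sb : Fin (2 ^ m) → Bool) : V m → V m → Prop
  | L i, lk1 => Sa i = false
  | R i, rk1 => Sb i = false
  | _, _ => False

/-- The graph `D_k(S_a, S_b)`. -/
def GS (m : ℕ) (Sa Sb : Fin (2 ^ m) → Bool) : SimpleGraph (V m) :=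
  G m ⊔ SimpleGraph.fromRel (extraRel m Sa Sb)

/-- Membership in `V_a = L ∪ F ∪ T ∪ {ℓ_k, ℓ_{k+1}, a}`. -/
def inVa {m : ℕ} : V m → Prop
  | L _ => True
  | F _ => True
  | T _ => True
  | lk => True
  | lk1 => True
  | a => True
  | _ => False

/-- Membership in `V_b = R ∪ F′ ∪ T′ ∪ {r_k, r_{k+1}, b}`. -/
def inVb {m : ℕ} : V m → Prop
  | R _ => True
  | F' _ => True
  | T' _ => True
  | rk => True
  | rk1 => True
  | b => True
  | _ => False

lemma adjGS {m : ℕ} {Sa Sb : Fin (2 ^ m) → Bool} {x y : V m}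
    (h : rel m x y ∨ rel m y x) (hne : x ≠ y) : (GS m Sa Sb).Adj x y := by
  have : (G m).Adj x y := (SimpleGraph.fromRel_adj _ _ _).mpr ⟨hne, h⟩
  exact SimpleGraph.sup_adj _ _ _ _ |>.mpr (Or.inl this)

lemma walkA_s3 {m : ℕ} {Sa Sb : Fin (2 ^ m) → Bool} (u : V m) (hu : inVa u) :
    ∃ p : (GS m Sa Sb).Walk u V.a, p.length ≤ 2 := by
  cases u with
  | L i =>
      have h1 : (GS m Sa Sb).Adj (V.L i) V.lk := adjGS (Or.inl trivial) nofun
      have h2 : (GS m Sa Sb).Adj V.lk V.a := adjGS (Or.inr trivial) nofun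
      exact ⟨.cons h1 (.cons h2 .nil), by simp⟩
  | lk =>
      have h2 : (GS m Sa Sb).Adj V.lk V.a := adjGS (Or.inr trivial) nofun
      exact ⟨.cons h2 .nil, by simp⟩
  | lk1 =>
      have h2 : (GS m Sa Sb).Adj V.lk1 V.a := adjGS (Or.inr trivial) nofun
      exact ⟨.cons h2 .nil, by simp⟩
  | F j =>
      have h2 : (GS m Sa Sb).Adj (V.F j) V.a := adjGS (Or.inr trivial) nofun
      exact ⟨.cons h2 .nil, by simp⟩
  | T j =>
      have h2 : (GS m Sa Sb).Adj (V.T j) V.a := adjGS (Or.inr trivial) nofun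
      exact ⟨.cons h2 .nil, by simp⟩
  | a => exact ⟨.nil, by simp⟩
  | R i => exact absurd hu nofun
  | rk => exact absurd hu nofun
  | rk1 => exact absurd hu nofun
  | F' j => exact absurd hu nofun
  | T' j => exact absurd hu nofun
  | b => exact absurd hu nofun

lemma walkB_s3 {m : ℕ} {Sa Sb : Fin (2 ^ m) → Bool} (u : V m) (hu : inVb u) :
    ∃ p : (GS m Sa Sb).Walk u V.b, p.length ≤ 2 := by
  cases u with
  | R i =>
      have h1 : (GS m Sa Sb).Adj (V.R i) V.rk := adjGS (Or.inl trivial) nofun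
      have h2 : (GS m Sa Sb).Adj V.rk V.b := adjGS (Or.inr trivial) nofun
      exact ⟨.cons h1 (.cons h2 .nil), by simp⟩
  | rk =>
      have h2 : (GS m Sa Sb).Adj V.rk V.b := adjGS (Or.inr trivial) nofun
      exact ⟨.cons h2 .nil, by simp⟩
  | rk1 =>
      have h2 : (GS m Sa Sb).Adj V.rk1 V.b := adjGS (Or.inr trivial) nofun
      exact ⟨.cons h2 .nil, by simp⟩
  | F' j =>
      have h2 : (GS m Sa Sb).Adj (V.F' j) V.b := adjGS (Or.inr trivial) nofun
      exact ⟨.cons h2 .nil, by simp⟩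
  | T' j =>
      have h2 : (GS m Sa Sb).Adj (V.T' j) V.b := adjGS (Or.inr trivial) nofun
      exact ⟨.cons h2 .nil, by simp⟩
  | b => exact ⟨.nil, by simp⟩
  | L i => exact absurd hu nofun
  | lk => exact absurd hu nofun
  | lk1 => exact absurd hu nofun
  | F j => exact absurd hu nofun
  | T j => exact absurd hu nofun
  | a => exact absurd hu nofun

theorem statement3 (m : ℕ) (hm : 1 ≤ m) (Sa Sb : Fin (2 ^ m) → Bool) :
    (∀ u v : V m, inVa u → inVa v → (GS m Sa Sb).dist u v ≤ 4) ∧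
    (∀ u v : V m, inVb u → inVb v → (GS m Sa Sb).dist u v ≤ 4) := by
  constructor
  · intro u v hu hv
    obtain ⟨p, hp⟩ := walkA_s3 (Sa := Sa) (Sb := Sb) u hu
    obtain ⟨q, hq⟩ := walkA_s3 (Sa := Sa) (Sb := Sb) v hv
    calc (GS m Sa Sb).dist u v ≤ (p.append q.reverse).length := SimpleGraph.dist_le _
      _ = p.length + q.length := by simp
      _ ≤ 4 := by omega
  · intro u v hu hv
    obtain ⟨p, hp⟩ := walkB_s3 (Sa := Sa) (Sb := Sb) u hu
    obtain ⟨q, hq⟩ := walkB_s3 (Sa := Sa) (Sb := Sb) v hv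
    calc (GS m Sa Sb).dist u v ≤ (p.append q.reverse).length := SimpleGraph.dist_le _
      _ = p.length + q.length := by simp
      _ ≤ 4 := by omega

end DiamGadget
end

section
/- In the stretched diameter graph A_{k,P}, for every pair of vertices u, v that do not belong to L′ ∪ R′ ∪ ⋃_i Y(ℓ′_i, ℓ_i) ∪ ⋃_i Y(r′_i, r_i), one has d(u, v) ≤ 4P + 1. -/
/-!
Every vertex outside `L′ ∪ R′ ∪ ⋃ Y(ℓ′_i, ℓ_i) ∪ ⋃ Y(r′_i, r_i)` is within `P` of a hub other
than the `ℓ_i, ℓ′_i, r_i, r′_i`, and each such hub is at most one segment of length `P` away from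
`ℓ_{k+1}` or `r_{k+1}`. As `ℓ_{k+1} r_{k+1}` is an edge, `d(u, v) ≤ 2P + 1 + 2P`.

The triangle inequality is applied to `SimpleGraph.edist`, which unlike `dist` (junk value `0`
between unreachable vertices) needs no connectivity hypothesis.
-/

/-- Generic graph built from "hub" vertices and "segments": each segment `s`
is a path with `len s` edges between the two hubs `ends s`, whose
`len s - 1` internal vertices are the pairs `⟨s, t⟩`.  A segment of length 1
is just an edge between its two endpoints. -/
def segGraph {Hub Seg : Type} (ends : Seg → Hub × Hub) (len : Seg → ℕ) :
    SimpleGraph (Hub ⊕ (s : Seg) × Fin (len s - 1)) :=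
  SimpleGraph.fromRel fun u v =>
    match u, v with
    | Sum.inl x, Sum.inl y => ∃ s, len s = 1 ∧ ends s = (x, y)
    | Sum.inl x, Sum.inr ⟨s, t⟩ =>
        ((ends s).1 = x ∧ (t : ℕ) = 0) ∨ ((ends s).2 = x ∧ (t : ℕ) + 2 = len s)
    | Sum.inr ⟨s, t⟩, Sum.inl x =>
        ((ends s).1 = x ∧ (t : ℕ) = 0) ∨ ((ends s).2 = x ∧ (t : ℕ) + 2 = len s)
    | Sum.inr ⟨s, t⟩, Sum.inr ⟨s', t'⟩ =>
        s = s' ∧ ((t : ℕ) + 1 = (t' : ℕ) ∨ (t' : ℕ) + 1 = (t : ℕ))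

open SimpleGraph

section SegGraph

variable {Hub Seg : Type} {ends : Seg → Hub × Hub} {len : Seg → ℕ}

lemma segGraph_adj_inr_inl_fst (s : Seg) (t : Fin (len s - 1)) (ht : (t : ℕ) = 0) :
    (segGraph ends len).Adj (.inr ⟨s, t⟩) (.inl (ends s).1) := by
  rw [segGraph, fromRel_adj]
  exact ⟨by simp, .inl (.inl ⟨rfl, ht⟩)⟩

lemma segGraph_adj_inr_inl_snd (s : Seg) (t : Fin (len s - 1)) (ht : (t : ℕ) + 2 = len s) :
    (segGraph ends len).Adj (.inr ⟨s, t⟩) (.inl (ends s).2) := by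
  rw [segGraph, fromRel_adj]
  exact ⟨by simp, .inl (.inr ⟨rfl, ht⟩)⟩

lemma segGraph_adj_inr_inr (s : Seg) (t t' : Fin (len s - 1)) (ht : (t : ℕ) + 1 = t') :
    (segGraph ends len).Adj (.inr ⟨s, t⟩) (.inr ⟨s, t'⟩) := by
  rw [segGraph, fromRel_adj]
  refine ⟨fun h => ?_, .inl ⟨rfl, .inl ht⟩⟩
  cases h
  omega

lemma segGraph_adj_inl_inl (s : Seg) (hs : len s = 1) (hne : (ends s).1 ≠ (ends s).2) :
    (segGraph ends len).Adj (.inl (ends s).1) (.inl (ends s).2) := by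
  rw [segGraph, fromRel_adj]
  exact ⟨by simpa using hne, .inl ⟨s, hs, rfl⟩⟩

lemma segGraph_edist_inr_inl_snd_le (s : Seg) (t : Fin (len s - 1)) :
    (segGraph ends len).edist (.inr ⟨s, t⟩) (.inl (ends s).2) ≤ (len s - 1 - t : ℕ) := by
  obtain ⟨t, ht⟩ := t
  induction hn : len s - 2 - t generalizing t with
  | zero =>
    have hadj := segGraph_adj_inr_inl_snd (ends := ends) s ⟨t, ht⟩ (by simp only; omega)
    rw [edist_eq_one_iff_adj.mpr hadj]
    exact_mod_cast (by omega : 1 ≤ len s - 1 - t)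
  | succ n ih =>
    have ht' : t + 1 < len s - 1 := by omega
    have hadj := segGraph_adj_inr_inr (ends := ends) s ⟨t, ht⟩ ⟨t + 1, ht'⟩ rfl
    calc _ ≤ (segGraph ends len).edist (.inr ⟨s, ⟨t, ht⟩⟩) (.inr ⟨s, ⟨t + 1, ht'⟩⟩) +
          (segGraph ends len).edist (.inr ⟨s, ⟨t + 1, ht'⟩⟩) (.inl (ends s).2) :=
          SimpleGraph.edist_triangle
      _ ≤ 1 + (len s - 1 - (t + 1) : ℕ) := by
          rw [edist_eq_one_iff_adj.mpr hadj]
          gcongr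
          exact ih (t + 1) ht' (by omega)
      _ = (len s - 1 - t : ℕ) := by norm_cast; omega

lemma segGraph_edist_ends_le (s : Seg) (hs : 1 ≤ len s) :
    (segGraph ends len).edist (.inl (ends s).1) (.inl (ends s).2) ≤ len s := by
  by_cases heq : (ends s).1 = (ends s).2
  · simp [heq]
  rcases hs.eq_or_lt with hs | hs
  · rw [edist_eq_one_iff_adj.mpr (segGraph_adj_inl_inl s hs.symm heq), ← hs]
    rfl
  let t₀ : Fin (len s - 1) := ⟨0, by omega⟩
  have hadj := (segGraph_adj_inr_inl_fst (ends := ends) s t₀ rfl).symm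
  calc _ ≤ (segGraph ends len).edist (.inl (ends s).1) (.inr ⟨s, t₀⟩) +
        (segGraph ends len).edist (.inr ⟨s, t₀⟩) (.inl (ends s).2) := SimpleGraph.edist_triangle
    _ ≤ 1 + (len s - 1 - 0 : ℕ) := by
        rw [edist_eq_one_iff_adj.mpr hadj]
        gcongr
        exact segGraph_edist_inr_inl_snd_le s t₀
    _ = len s := by norm_cast; omega

end SegGraph

namespace StretchDiam

/-- Hub (distinguished) vertices of the stretched diameter graph `A_{k,P}`. -/
inductive Hub (m : ℕ) : Type
  | L : Fin (2 ^ m) → Hub m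
  | L' : Fin (2 ^ m) → Hub m
  | R : Fin (2 ^ m) → Hub m
  | R' : Fin (2 ^ m) → Hub m
  | lk : Hub m
  | lk1 : Hub m
  | rk : Hub m
  | rk1 : Hub m
  | F : Fin m → Hub m
  | T : Fin m → Hub m
  | F' : Fin m → Hub m
  | T' : Fin m → Hub m

/-- Segments (paths between hubs) of `A_{k,P}`. -/
inductive Seg (m : ℕ) : Type
  | Llk : Fin (2 ^ m) → Seg m            -- ℓ_i – ℓ_k, length P
  | Rrk : Fin (2 ^ m) → Seg m            -- r_i – r_k, length P
  | lklk1 : Seg m                        -- ℓ_k – ℓ_{k+1}, length P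
  | rkrk1 : Seg m                        -- r_k – r_{k+1}, length P
  | lk1rk1 : Seg m                       -- edge ℓ_{k+1} – r_{k+1}
  | Lbit : Fin (2 ^ m) → Fin m → Seg m   -- ℓ_i – (f_j or t_j), length P
  | Rbit : Fin (2 ^ m) → Fin m → Seg m   -- r_i – (f'_j or t'_j), length P
  | FT' : Fin m → Seg m                  -- edge f_j – t'_j
  | TF' : Fin m → Seg m                  -- edge t_j – f'_j
  | Flk1 : Fin m → Seg m                 -- f_j – ℓ_{k+1}, length P
  | Tlk1 : Fin m → Seg m                 -- t_j – ℓ_{k+1}, length P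
  | F'rk1 : Fin m → Seg m                -- f'_j – r_{k+1}, length P
  | T'rk1 : Fin m → Seg m                -- t'_j – r_{k+1}, length P
  | L'L : Fin (2 ^ m) → Seg m            -- ℓ'_i – ℓ_i, length P
  | R'R : Fin (2 ^ m) → Seg m            -- r'_i – r_i, length P

open Hub Seg

/-- Endpoints of each segment. -/
def ends (m : ℕ) : Seg m → Hub m × Hub m
  | Llk i => (L i, lk)
  | Rrk i => (R i, rk)
  | lklk1 => (lk, lk1)
  | rkrk1 => (rk, rk1)
  | lk1rk1 => (lk1, rk1)
  | Lbit i j => (L i, if Nat.testBit i.val j.val then T j else F j)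
  | Rbit i j => (R i, if Nat.testBit i.val j.val then T' j else F' j)
  | FT' j => (F j, T' j)
  | TF' j => (T j, F' j)
  | Flk1 j => (F j, lk1)
  | Tlk1 j => (T j, lk1)
  | F'rk1 j => (F' j, rk1)
  | T'rk1 j => (T' j, rk1)
  | L'L i => (L' i, L i)
  | R'R i => (R' i, R i)

/-- Length of each segment: the three special edges have length 1, all other
segments are paths of length `P`. -/
def len (m P : ℕ) : Seg m → ℕ
  | lk1rk1 => 1
  | FT' _ => 1
  | TF' _ => 1
  | _ => P

/-- Vertices of `A_{k,P}`: hubs together with internal path vertices. -/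
abbrev V (m P : ℕ) : Type := Hub m ⊕ (s : Seg m) × Fin (len m P s - 1)

/-- The stretched diameter graph `A_{k,P}`. -/
def A (m P : ℕ) : SimpleGraph (V m P) := segGraph (ends m) (len m P)

/-- Membership in `L′ ∪ R′ ∪ ⋃_i Y(ℓ′_i, ℓ_i) ∪ ⋃_i Y(r′_i, r_i)`. -/
def excluded {m P : ℕ} : V m P → Prop
  | Sum.inl (L' _) => True
  | Sum.inl (R' _) => True
  | Sum.inr ⟨L'L _, _⟩ => True
  | Sum.inr ⟨R'R _, _⟩ => True
  | _ => False

variable {m P : ℕ}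

def Hub.IsCentral : Hub m → Prop
  | L _ | L' _ | R _ | R' _ => False
  | _ => True

lemma len_le (hP : 1 ≤ P) (s : Seg m) : len m P s ≤ P := by
  cases s <;> simp only [len] <;> omega

lemma edist_ends_le (hP : 1 ≤ P) (s : Seg m) :
    (A m P).edist (.inl (ends m s).1) (.inl (ends m s).2) ≤ len m P s :=
  segGraph_edist_ends_le s (by cases s <;> simp only [len] <;> omega)

lemma isCentral_snd_ends {s : Seg m} {t : Fin (len m P s - 1)}
    (h : ¬ excluded (Sum.inr ⟨s, t⟩ : V m P)) : (ends m s).2.IsCentral := by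
  cases s <;> simp only [excluded, not_true_eq_false] at h <;> simp only [ends] <;>
    first | trivial | split <;> trivial

lemma exists_isCentral_edist_le (hP : 1 ≤ P) (u : V m P) (hu : ¬ excluded u) :
    ∃ x : Hub m, x.IsCentral ∧ (A m P).edist u (.inl x) ≤ P := by
  rcases u with x | ⟨s, t⟩
  · cases x
    case L i => exact ⟨lk, trivial, edist_ends_le hP (Llk i)⟩
    case R i => exact ⟨rk, trivial, edist_ends_le hP (Rrk i)⟩
    case L' | R' => exact absurd trivial hu
    all_goals (refine ⟨_, ?_, SimpleGraph.edist_self.trans_le zero_le⟩; trivial)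
  · refine ⟨_, isCentral_snd_ends hu, (segGraph_edist_inr_inl_snd_le s t).trans ?_⟩
    exact_mod_cast (Nat.sub_le _ _).trans ((Nat.sub_le _ _).trans (len_le hP s))

lemma exists_lk1_or_rk1_edist_le_of_isCentral (hP : 1 ≤ P) {x : Hub m} (hx : x.IsCentral) :
    ∃ y, (y = lk1 ∨ y = rk1) ∧ (A m P).edist (.inl x) (.inl y) ≤ P := by
  cases x
  case L | L' | R | R' => exact hx.elim
  case lk => exact ⟨lk1, .inl rfl, edist_ends_le hP lklk1⟩
  case rk => exact ⟨rk1, .inr rfl, edist_ends_le hP rkrk1⟩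
  case lk1 => exact ⟨lk1, .inl rfl, by simp⟩
  case rk1 => exact ⟨rk1, .inr rfl, by simp⟩
  case F j => exact ⟨lk1, .inl rfl, edist_ends_le hP (Flk1 j)⟩
  case T j => exact ⟨lk1, .inl rfl, edist_ends_le hP (Tlk1 j)⟩
  case F' j => exact ⟨rk1, .inr rfl, edist_ends_le hP (F'rk1 j)⟩
  case T' j => exact ⟨rk1, .inr rfl, edist_ends_le hP (T'rk1 j)⟩

lemma exists_lk1_or_rk1_edist_le (hP : 1 ≤ P) (u : V m P) (hu : ¬ excluded u) :
    ∃ y, (y = lk1 ∨ y = rk1) ∧ (A m P).edist u (.inl y) ≤ 2 * P := by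
  obtain ⟨x, hx, hux⟩ := exists_isCentral_edist_le hP u hu
  obtain ⟨y, hy, hxy⟩ := exists_lk1_or_rk1_edist_le_of_isCentral hP hx
  refine ⟨y, hy, ?_⟩
  calc _ ≤ (A m P).edist u (.inl x) + (A m P).edist (.inl x) (.inl y) := SimpleGraph.edist_triangle
    _ ≤ P + P := add_le_add hux hxy
    _ = (2 * P : ℕ) := by push_cast; ring

lemma edist_le_one_of_lk1_or_rk1 {y y' : Hub m} (hy : y = lk1 ∨ y = rk1)
    (hy' : y' = lk1 ∨ y' = rk1) :
    (A m P).edist (.inl y) (.inl y') ≤ 1 := by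
  have h : (A m P).edist (.inl lk1) (.inl rk1) ≤ 1 := segGraph_edist_ends_le lk1rk1 le_rfl
  rcases hy with rfl | rfl <;> rcases hy' with rfl | rfl
  exacts [by simp, h, SimpleGraph.edist_comm ▸ h, by simp]

theorem statement5_general (m P : ℕ) (hP : 1 ≤ P) :
    ∀ u v : V m P, ¬ excluded u → ¬ excluded v → (A m P).dist u v ≤ 4 * P + 1 := by
  intro u v hu hv
  obtain ⟨y, hy, huy⟩ := exists_lk1_or_rk1_edist_le hP u hu
  obtain ⟨y', hy', hvy'⟩ := exists_lk1_or_rk1_edist_le hP v hv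
  rw [SimpleGraph.edist_comm] at hvy'
  have hedist : (A m P).edist u v ≤ (4 * P + 1 : ℕ) :=
    calc (A m P).edist u v
        ≤ (A m P).edist u (.inl y) + (A m P).edist (.inl y) (.inl y') +
            (A m P).edist (.inl y') v :=
          SimpleGraph.edist_triangle.trans (add_le_add_left SimpleGraph.edist_triangle _)
      _ ≤ 2 * P + 1 + 2 * P := by
          gcongr
          exact edist_le_one_of_lk1_or_rk1 hy hy'
      _ = (4 * P + 1 : ℕ) := by push_cast; ring
  exact ENat.toNat_le_of_le_natCast hedist

theorem statement5 (m P : ℕ) (hm : 1 ≤ m) (hP : 1 ≤ P) :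
    ∀ u v : V m P, ¬ excluded u → ¬ excluded v → (A m P).dist u v ≤ 4 * P + 1 :=
  statement5_general m P hP

end StretchDiam
end

section
/- In the graph A_{k,P}(S_a, S_b), if 0 ≤ i ≤ k−1 is such that S_a(i) = 0 or S_b(i) = 0, then d(ℓ_i, u) ≤ 2P + 2 for every vertex u ∈ R ∪ {r_{k+1}}. -/
namespace StretchDiam

open Hub Seg

/-- Extra edges depending on the input strings: an edge `ℓ_i–ℓ_{k+1}` for each
`i` with `S_a(i) = 0`, and an edge `r_i–r_{k+1}` for each `i` with `S_b(i) = 0`. -/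
def extraRel (m P : ℕ) (Sa Sb : Fin (2 ^ m) → Bool) : V m P → V m P → Prop
  | Sum.inl (L i), Sum.inl lk1 => Sa i = false
  | Sum.inl (R i), Sum.inl rk1 => Sb i = false
  | _, _ => False

/-- The graph `A_{k,P}(S_a, S_b)`. -/
def AS (m P : ℕ) (Sa Sb : Fin (2 ^ m) → Bool) : SimpleGraph (V m P) :=
  A m P ⊔ SimpleGraph.fromRel (extraRel m P Sa Sb)

end StretchDiam

/- Explicit walks suffice. The hubs `ℓ_i` and `r_j` with `i ≠ j` are joined through
a binary digit `b` in which `i` and `j` differ: `ℓ_i` reaches `f_b` or `t_b`, the edge `f_b–t'_b`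
or `t_b–f'_b` crosses over, and `r_j` is attached to exactly that primed vertex; this costs
`2P + 1`. The hub `r_{k+1}` is always reached along `ℓ_i, ℓ_k, ℓ_{k+1}, r_{k+1}`, also in
`2P + 1`. Only `ℓ_i` and `r_i` need the extra edges: either `ℓ_i, ℓ_{k+1}, r_{k+1}, r_k, r_i` or
`ℓ_i, …, r_{k+1}, r_i`, each of length at most `2P + 2`. -/

theorem Nat.exists_lt_testBit_ne_of_ne {x y m : ℕ} (hx : x < 2 ^ m) (hy : y < 2 ^ m)
    (hxy : x ≠ y) : ∃ b < m, x.testBit b ≠ y.testBit b := by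
  obtain ⟨b, hb⟩ := Nat.exists_testBit_ne_of_ne hxy
  refine ⟨b, lt_of_not_ge fun hmb => hb ?_, hb⟩
  have hpow := Nat.pow_le_pow_right two_pos hmb
  rw [Nat.testBit_lt_two_pow (hx.trans_le hpow), Nat.testBit_lt_two_pow (hy.trans_le hpow)]

section segGraph

open SimpleGraph

variable {H S : Type} (ends : S → H × H) (len : S → ℕ)

theorem segGraph.exists_walk_inr_snd (s : S) :
    ∀ (d t : ℕ) (ht : t < len s - 1), t + d + 2 = len s →
      ∃ w : (segGraph ends len).Walk (Sum.inr ⟨s, ⟨t, ht⟩⟩) (Sum.inl (ends s).2),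
        w.length = d + 1 := by
  intro d
  induction d with
  | zero =>
    intro t ht hd
    have e : (segGraph ends len).Adj (Sum.inr ⟨s, ⟨t, ht⟩⟩) (Sum.inl (ends s).2) :=
      ⟨by simp, Or.inl (Or.inr ⟨rfl, by simpa using hd⟩)⟩
    exact ⟨e.toWalk, rfl⟩
  | succ d ih =>
    intro t ht hd
    have ht' : t + 1 < len s - 1 := by omega
    obtain ⟨w, hw⟩ := ih (t + 1) ht' (by omega)
    have e : (segGraph ends len).Adj (Sum.inr ⟨s, ⟨t, ht⟩⟩) (Sum.inr ⟨s, ⟨t + 1, ht'⟩⟩) :=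
      ⟨by simp, Or.inl ⟨rfl, Or.inl rfl⟩⟩
    exact ⟨.cons e w, by simp [hw]⟩

theorem segGraph.exists_walk (s : S) (h1 : 1 ≤ len s) (hne : (ends s).1 ≠ (ends s).2) :
    ∃ w : (segGraph ends len).Walk (Sum.inl (ends s).1) (Sum.inl (ends s).2),
      w.length = len s := by
  rcases h1.eq_or_lt with h1 | h2
  · have e : (segGraph ends len).Adj (Sum.inl (ends s).1) (Sum.inl (ends s).2) :=
      ⟨by simpa using hne, Or.inl ⟨s, h1.symm, rfl⟩⟩
    exact ⟨e.toWalk, h1⟩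
  · have ht : 0 < len s - 1 := by omega
    obtain ⟨w, hw⟩ := exists_walk_inr_snd ends len s (len s - 2) 0 ht (by omega)
    have e : (segGraph ends len).Adj (Sum.inl (ends s).1) (Sum.inr ⟨s, ⟨0, ht⟩⟩) :=
      ⟨by simp, Or.inl (Or.inl ⟨rfl, rfl⟩)⟩
    exact ⟨.cons e w, by simp only [Walk.length_cons, hw]; omega⟩

end segGraph

namespace StretchDiam

open Hub Seg SimpleGraph

variable {m P : ℕ} (Sa Sb : Fin (2 ^ m) → Bool)

theorem one_le_len (hP : 1 ≤ P) (s : Seg m) : 1 ≤ len m P s := by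
  cases s <;> simp [len, hP]

theorem ends_fst_ne_snd (s : Seg m) : (ends m s).1 ≠ (ends m s).2 := by
  cases s <;> simp only [ends] <;> (try split_ifs) <;> simp

theorem exists_walk_of_ends (hP : 1 ≤ P) {s : Seg m} {a b : Hub m} (hab : ends m s = (a, b)) :
    ∃ w : (AS m P Sa Sb).Walk (Sum.inl a) (Sum.inl b), w.length = len m P s := by
  obtain rfl : (ends m s).1 = a := by rw [hab]
  obtain rfl : (ends m s).2 = b := by rw [hab]
  obtain ⟨w, hw⟩ := segGraph.exists_walk (ends m) (len m P) s (one_le_len hP s)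
    (ends_fst_ne_snd s)
  exact ⟨w.mapLe (show segGraph (ends m) (len m P) ≤ AS m P Sa Sb from le_sup_left),
    by rw [Walk.length_mapLe, hw]⟩

theorem adj_L_lk1 {i : Fin (2 ^ m)} (h : Sa i = false) :
    (AS m P Sa Sb).Adj (Sum.inl (L i)) (Sum.inl lk1) :=
  Or.inr ⟨by simp, Or.inl h⟩

theorem adj_R_rk1 {j : Fin (2 ^ m)} (h : Sb j = false) :
    (AS m P Sa Sb).Adj (Sum.inl (R j)) (Sum.inl rk1) :=
  Or.inr ⟨by simp, Or.inl h⟩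

theorem exists_walk_L_rk1 (hP : 1 ≤ P) (i : Fin (2 ^ m)) :
    ∃ w : (AS m P Sa Sb).Walk (Sum.inl (L i)) (Sum.inl rk1), w.length = 2 * P + 1 := by
  obtain ⟨w₁, hw₁⟩ := exists_walk_of_ends Sa Sb hP (s := Llk i) rfl
  obtain ⟨w₂, hw₂⟩ := exists_walk_of_ends Sa Sb hP (s := lklk1) rfl
  obtain ⟨w₃, hw₃⟩ := exists_walk_of_ends Sa Sb hP (s := lk1rk1) rfl
  refine ⟨w₁.append (w₂.append w₃), ?_⟩
  rw [Walk.length_append, Walk.length_append, hw₁, hw₂, hw₃]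
  simp only [len]
  ring

theorem exists_walk_L_R_of_testBit_ne (hP : 1 ≤ P) {i j : Fin (2 ^ m)} (b : Fin m)
    (hb : i.val.testBit b ≠ j.val.testBit b) :
    ∃ w : (AS m P Sa Sb).Walk (Sum.inl (L i)) (Sum.inl (R j)), w.length = 2 * P + 1 := by
  obtain ⟨hi, hj⟩ | ⟨hi, hj⟩ : (i.val.testBit b = false ∧ j.val.testBit b = true) ∨
      (i.val.testBit b = true ∧ j.val.testBit b = false) := by
    revert hb; cases i.val.testBit b <;> cases j.val.testBit b <;> simp
  · obtain ⟨w₁, hw₁⟩ := exists_walk_of_ends Sa Sb hP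
      (show ends m (Lbit i b) = (L i, F b) by simp [ends, hi])
    obtain ⟨w₂, hw₂⟩ := exists_walk_of_ends Sa Sb hP (s := FT' b) rfl
    obtain ⟨w₃, hw₃⟩ := exists_walk_of_ends Sa Sb hP
      (show ends m (Rbit j b) = (R j, T' b) by simp [ends, hj])
    refine ⟨w₁.append (w₂.append w₃.reverse), ?_⟩
    rw [Walk.length_append, Walk.length_append, Walk.length_reverse, hw₁, hw₂, hw₃]
    simp only [len]
    ring
  · obtain ⟨w₁, hw₁⟩ := exists_walk_of_ends Sa Sb hP
      (show ends m (Lbit i b) = (L i, T b) by simp [ends, hi])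
    obtain ⟨w₂, hw₂⟩ := exists_walk_of_ends Sa Sb hP (s := TF' b) rfl
    obtain ⟨w₃, hw₃⟩ := exists_walk_of_ends Sa Sb hP
      (show ends m (Rbit j b) = (R j, F' b) by simp [ends, hj])
    refine ⟨w₁.append (w₂.append w₃.reverse), ?_⟩
    rw [Walk.length_append, Walk.length_append, Walk.length_reverse, hw₁, hw₂, hw₃]
    simp only [len]
    ring

theorem exists_walk_L_R_of_ne (hP : 1 ≤ P) {i j : Fin (2 ^ m)} (hij : i ≠ j) :
    ∃ w : (AS m P Sa Sb).Walk (Sum.inl (L i)) (Sum.inl (R j)), w.length = 2 * P + 1 := by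
  obtain ⟨b, hbm, hb⟩ := Nat.exists_lt_testBit_ne_of_ne i.isLt j.isLt (Fin.val_ne_of_ne hij)
  exact exists_walk_L_R_of_testBit_ne Sa Sb hP ⟨b, hbm⟩ hb

theorem exists_walk_L_R_self (hP : 1 ≤ P) {i : Fin (2 ^ m)} (h : Sa i = false ∨ Sb i = false) :
    ∃ w : (AS m P Sa Sb).Walk (Sum.inl (L i)) (Sum.inl (R i)), w.length ≤ 2 * P + 2 := by
  rcases h with ha | hb
  · obtain ⟨w₂, hw₂⟩ := exists_walk_of_ends Sa Sb hP (s := lk1rk1) rfl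
    obtain ⟨w₃, hw₃⟩ := exists_walk_of_ends Sa Sb hP (s := rkrk1) rfl
    obtain ⟨w₄, hw₄⟩ := exists_walk_of_ends Sa Sb hP (s := Rrk i) rfl
    refine ⟨.cons (adj_L_lk1 Sa Sb ha) (w₂.append (w₃.reverse.append w₄.reverse)), ?_⟩
    rw [Walk.length_cons, Walk.length_append, Walk.length_append, Walk.length_reverse,
      Walk.length_reverse, hw₂, hw₃, hw₄]
    simp only [len]
    omega
  · obtain ⟨w, hw⟩ := exists_walk_L_rk1 Sa Sb hP i
    exact ⟨w.append (adj_R_rk1 Sa Sb hb).symm.toWalk, by simp [hw]⟩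

theorem statement7_general (m P : ℕ) (hP : 1 ≤ P)
    (Sa Sb : Fin (2 ^ m) → Bool) (i : Fin (2 ^ m))
    (h : Sa i = false ∨ Sb i = false) :
    ∀ u : V m P, ((∃ j : Fin (2 ^ m), u = Sum.inl (R j)) ∨ u = Sum.inl rk1) →
      (AS m P Sa Sb).dist (Sum.inl (L i)) u ≤ 2 * P + 2 := by
  rintro u (⟨j, rfl⟩ | rfl)
  · obtain ⟨w, hw⟩ : ∃ w : (AS m P Sa Sb).Walk (Sum.inl (L i)) (Sum.inl (R j)),
        w.length ≤ 2 * P + 2 := by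
      rcases eq_or_ne i j with rfl | hij
      · exact exists_walk_L_R_self Sa Sb hP h
      · obtain ⟨w, hw⟩ := exists_walk_L_R_of_ne Sa Sb hP hij
        exact ⟨w, by omega⟩
    exact (dist_le w).trans hw
  · obtain ⟨w, hw⟩ := exists_walk_L_rk1 Sa Sb hP i
    exact (dist_le w).trans (by omega)

theorem statement7 (m P : ℕ) (hm : 1 ≤ m) (hP : 1 ≤ P)
    (Sa Sb : Fin (2 ^ m) → Bool) (i : Fin (2 ^ m))
    (h : Sa i = false ∨ Sb i = false) :
    ∀ u : V m P, ((∃ j : Fin (2 ^ m), u = Sum.inl (R j)) ∨ u = Sum.inl rk1) →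
      (AS m P Sa Sb).dist (Sum.inl (L i)) u ≤ 2 * P + 2 :=
  statement7_general m P hP Sa Sb i h

end StretchDiam
end

section
/- In the radius gadget graph R_k, for all 0 ≤ i, j ≤ k−1 with i ≠ j one has d(ℓ_i, r_j) = 3, and for all 0 ≤ i ≤ k−1 one has d(ℓ_i, r_i) = 4. -/
/-!
Statement 9: In the radius gadget graph `R_k`, for all `0 ≤ i, j ≤ k−1` with
`i ≠ j` one has `d(ℓ_i, r_j) = 3`, and for all `0 ≤ i ≤ k−1` one has
`d(ℓ_i, r_i) = 4`.
-/

namespace RadGadget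

/-- Vertices of the radius gadget graph `R_k`, `k = 2^m`. -/
inductive V (m : ℕ) : Type
  | L : Fin (2 ^ m) → V m
  | R : Fin (2 ^ m) → V m
  | lk : V m
  | lk1 : V m
  | rk : V m
  | rk1 : V m
  | F : Fin m → V m
  | T : Fin m → V m
  | F' : Fin m → V m
  | T' : Fin m → V m
  | x1 : V m
  | x2 : V m
  | x3 : V m
  deriving DecidableEq, Fintype

open V

/-- One direction of the edge relation of `R_k`. -/
def rel (m : ℕ) : V m → V m → Prop
  | L _, lk => True
  | R _, rk => True
  | lk, lk1 => True
  | rk, rk1 => True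
  | lk1, rk1 => True
  | F j, T' j' => j = j'
  | T j, F' j' => j = j'
  | F j, T j' => j = j'
  | F' j, T' j' => j = j'
  | L i, F j => Nat.testBit i.val j.val = false
  | L i, T j => Nat.testBit i.val j.val = true
  | R i, F' j => Nat.testBit i.val j.val = false
  | R i, T' j => Nat.testBit i.val j.val = true
  | L _, x1 => True
  | x1, x2 => True
  | x2, x3 => True
  | _, _ => False

/-- The radius gadget graph `R_k`. -/
def G (m : ℕ) : SimpleGraph (V m) := SimpleGraph.fromRel (rel m)
open SimpleGraph

variable {m : ℕ}

lemma not_adj_LR (i j : Fin (2^m)) : ¬ (G m).Adj (L i) (R j) := by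
  simp [G, rel]

lemma no_len2 {i j : Fin (2^m)} {a : V m} (h1 : (G m).Adj (L i) a)
    (h2 : (G m).Adj a (R j)) : False := by
  cases a <;> simp_all [G, rel]

lemma no_len3 {i : Fin (2^m)} {a b : V m} (h1 : (G m).Adj (L i) a)
    (h2 : (G m).Adj a b) (h3 : (G m).Adj b (R i)) : False := by
  cases a <;> cases b <;> simp_all [G, rel]

lemma three_le_len {i j : Fin (2^m)} (p : (G m).Walk (L i) (R j)) :
    3 ≤ p.length := by
  cases p with
  | cons h1 q =>
    cases q with
    | nil => exact absurd h1 (not_adj_LR i j)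
    | cons h2 r =>
      cases r with
      | nil => exact (no_len2 h1 h2).elim
      | cons h3 s => simp [SimpleGraph.Walk.length_cons]

lemma four_le_len {i : Fin (2^m)} (p : (G m).Walk (L i) (R i)) :
    4 ≤ p.length := by
  cases p with
  | cons h1 q =>
    cases q with
    | nil => exact absurd h1 (not_adj_LR i i)
    | cons h2 r =>
      cases r with
      | nil => exact (no_len2 h1 h2).elim
      | cons h3 s =>
        cases s with
        | nil => exact (no_len3 h1 h2 h3).elim
        | cons h4 t => simp [SimpleGraph.Walk.length_cons]

theorem statement9 (m : ℕ) (hm : 1 ≤ m) :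
    (∀ i j : Fin (2 ^ m), i ≠ j → (G m).dist (L i) (R j) = 3) ∧
    (∀ i : Fin (2 ^ m), (G m).dist (L i) (R i) = 4) := by
  constructor
  · intro i j hij
    -- find a bit where i and j differ
    have hne : (i : ℕ) ≠ (j : ℕ) := fun h => hij (Fin.ext h)
    have hbit : ∃ n, Nat.testBit (i : ℕ) n ≠ Nat.testBit (j : ℕ) n := by
      by_contra h
      push_neg at h
      exact hne (Nat.eq_of_testBit_eq h)
    obtain ⟨n, hn⟩ := hbit
    have hnm : n < m := by
      by_contra h
      push_neg at h
      have h1 : Nat.testBit (i : ℕ) n = false :=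
        Nat.testBit_eq_false_of_lt (lt_of_lt_of_le i.isLt (Nat.pow_le_pow_right (by norm_num) h))
      have h2 : Nat.testBit (j : ℕ) n = false :=
        Nat.testBit_eq_false_of_lt (lt_of_lt_of_le j.isLt (Nat.pow_le_pow_right (by norm_num) h))
      exact hn (h1.trans h2.symm)
    set b : Fin m := ⟨n, hnm⟩ with hb
    have hwalk : ∃ p : (G m).Walk (L i) (R j), p.length = 3 := by
      cases hti : Nat.testBit (i : ℕ) n with
      | false =>
        have htj : Nat.testBit (j : ℕ) n = true := by
          cases htj : Nat.testBit (j : ℕ) n with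
          | false => exact absurd (hti.trans htj.symm) hn
          | true => rfl
        have e1 : (G m).Adj (L i) (F b) := by simp [G, rel, hb, hti]
        have e2 : (G m).Adj (F b) (T' b) := by simp [G, rel]
        have e3 : (G m).Adj (T' b) (R j) := by simp [G, rel, hb, htj]
        exact ⟨SimpleGraph.Walk.cons e1 (SimpleGraph.Walk.cons e2
          (SimpleGraph.Walk.cons e3 SimpleGraph.Walk.nil)), rfl⟩
      | true =>
        have htj : Nat.testBit (j : ℕ) n = false := by
          cases htj : Nat.testBit (j : ℕ) n with
          | false => rfl
          | true => exact absurd (hti.trans htj.symm) hn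
        have e1 : (G m).Adj (L i) (T b) := by simp [G, rel, hb, hti]
        have e2 : (G m).Adj (T b) (F' b) := by simp [G, rel]
        have e3 : (G m).Adj (F' b) (R j) := by simp [G, rel, hb, htj]
        exact ⟨SimpleGraph.Walk.cons e1 (SimpleGraph.Walk.cons e2
          (SimpleGraph.Walk.cons e3 SimpleGraph.Walk.nil)), rfl⟩
    obtain ⟨p, hp⟩ := hwalk
    have hreach : (G m).Reachable (L i) (R j) := ⟨p⟩
    have hle : (G m).dist (L i) (R j) ≤ 3 := hp ▸ SimpleGraph.dist_le p
    obtain ⟨q, hq⟩ := hreach.exists_walk_length_eq_dist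
    have hge : 3 ≤ (G m).dist (L i) (R j) := hq ▸ three_le_len q
    omega
  · intro i
    set b : Fin m := ⟨0, hm⟩ with hb
    have hwalk : ∃ p : (G m).Walk (L i) (R i), p.length = 4 := by
      cases hti : Nat.testBit (i : ℕ) 0 with
      | false =>
        have e1 : (G m).Adj (L i) (F b) := by simp [G, rel, hb, hti]
        have e2 : (G m).Adj (F b) (T' b) := by simp [G, rel]
        have e3 : (G m).Adj (T' b) (F' b) := by simp [G, rel]
        have e4 : (G m).Adj (F' b) (R i) := by simp [G, rel, hb, hti]
        exact ⟨SimpleGraph.Walk.cons e1 (SimpleGraph.Walk.cons e2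
          (SimpleGraph.Walk.cons e3 (SimpleGraph.Walk.cons e4 SimpleGraph.Walk.nil))), rfl⟩
      | true =>
        have e1 : (G m).Adj (L i) (T b) := by simp [G, rel, hb, hti]
        have e2 : (G m).Adj (T b) (F' b) := by simp [G, rel]
        have e3 : (G m).Adj (F' b) (T' b) := by simp [G, rel]
        have e4 : (G m).Adj (T' b) (R i) := by simp [G, rel, hb, hti]
        exact ⟨SimpleGraph.Walk.cons e1 (SimpleGraph.Walk.cons e2
          (SimpleGraph.Walk.cons e3 (SimpleGraph.Walk.cons e4 SimpleGraph.Walk.nil))), rfl⟩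
    obtain ⟨p, hp⟩ := hwalk
    have hreach : (G m).Reachable (L i) (R i) := ⟨p⟩
    have hle : (G m).dist (L i) (R i) ≤ 4 := hp ▸ SimpleGraph.dist_le p
    obtain ⟨q, hq⟩ := hreach.exists_walk_length_eq_dist
    have hge : 4 ≤ (G m).dist (L i) (R i) := hq ▸ four_le_len q
    omega

end RadGadget
end

section
/- In the graph R_k(S_a, S_b), every vertex u not belonging to L has eccentricity e(u) ≥ 4. -/
/-!
The function `level` changes by at most one along every edge of `R_k(S_a, S_b)`, so
`level u ≤ level v + d(u, v)`. It vanishes at `x₃`, equals `6` at `r₀`, and takes the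
value `3` exactly on `L`. Hence a vertex outside `L` has level `≥ 4`, and is then at
distance `≥ 4` from `x₃`, or level `≤ 2`, and is then at distance `≥ 4` from `r₀`.
-/

namespace RadGadget

open V

/-- Extra edges depending on the input strings: `ℓ_i–ℓ_{k+1}` when `S_a(i) = 1`
and `r_i–r_{k+1}` when `S_b(i) = 1`. -/
def extraRel (m : ℕ) (Sa Sb : Fin (2 ^ m) → Bool) : V m → V m → Prop
  | L i, lk1 => Sa i = true
  | R i, rk1 => Sb i = true
  | _, _ => False

/-- The graph `R_k(S_a, S_b)`. -/
def GS (m : ℕ) (Sa Sb : Fin (2 ^ m) → Bool) : SimpleGraph (V m) :=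
  G m ⊔ SimpleGraph.fromRel (extraRel m Sa Sb)

instance (m : ℕ) : Nonempty (V m) := ⟨x1⟩

/-- The eccentricity `e(u) = max_v d(u,v)` in `R_k(S_a, S_b)`. -/
noncomputable def ecc (m : ℕ) (Sa Sb : Fin (2 ^ m) → Bool) (u : V m) : ℕ :=
  Finset.univ.sup fun v => (GS m Sa Sb).dist u v

/-- The radius `min_u e(u)` of `R_k(S_a, S_b)`. -/
noncomputable def radius (m : ℕ) (Sa Sb : Fin (2 ^ m) → Bool) : ℕ :=
  Finset.univ.inf' Finset.univ_nonempty fun u => ecc m Sa Sb u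

section

variable {α : Type*} {G : SimpleGraph α} {f : α → ℕ}

lemma _root_.SimpleGraph.Walk.le_add_length (hf : ∀ ⦃u v⦄, G.Adj u v → f u ≤ f v + 1)
    {u v : α} (w : G.Walk u v) : f u ≤ f v + w.length := by
  induction w with
  | nil => simp
  | cons h _ ih =>
    have := hf h
    simp only [SimpleGraph.Walk.length_cons]
    omega

lemma _root_.SimpleGraph.Reachable.le_add_dist (hf : ∀ ⦃u v⦄, G.Adj u v → f u ≤ f v + 1)
    {u v : α} (h : G.Reachable u v) : f u ≤ f v + G.dist u v := by
  obtain ⟨w, hw⟩ := h.exists_walk_length_eq_dist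
  exact hw ▸ w.le_add_length hf

end

variable {m : ℕ} {Sa Sb : Fin (2 ^ m) → Bool}

def level : V m → ℕ
  | L _ => 3
  | R _ => 6
  | lk => 4
  | lk1 => 4
  | rk => 6
  | rk1 => 5
  | F _ => 4
  | T _ => 4
  | F' _ => 5
  | T' _ => 5
  | x1 => 2
  | x2 => 1
  | x3 => 0

lemma level_le_level_add_one_of_adj ⦃u v : V m⦄ (h : (GS m Sa Sb).Adj u v) :
    level u ≤ level v + 1 := by
  cases u <;> cases v <;> simp_all [GS, G, SimpleGraph.fromRel_adj, rel, extraRel, level]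

lemma level_ne_three {u : V m} (hu : ∀ i, u ≠ L i) : level u ≠ 3 := by
  cases u <;> simp_all [level]

lemma G_connected : (G m).Connected := by
  have step {u v w : V m} (huv : (G m).Reachable u v) (hvw : (G m).Adj v w) :
      (G m).Reachable u w :=
    huv.trans hvw.reachable
  have hlk : (G m).Reachable lk lk := .refl lk
  let ℓ₀ : V m := L ⟨0, Nat.two_pow_pos m⟩
  have hℓ₀ : (G m).Reachable lk ℓ₀ := step hlk (by simp [G, ℓ₀, rel])
  have hx1 : (G m).Reachable lk x1 := step hℓ₀ (by simp [G, ℓ₀, rel])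
  have hF (j : Fin m) : (G m).Reachable lk (F j) := step hℓ₀ (by simp [G, ℓ₀, rel])
  have hT (j : Fin m) : (G m).Reachable lk (T j) := step (hF j) (by simp [G, rel])
  have hlk1 : (G m).Reachable lk lk1 := step hlk (by simp [G, rel])
  have hrk1 : (G m).Reachable lk rk1 := step hlk1 (by simp [G, rel])
  have hrk : (G m).Reachable lk rk := step hrk1 (by simp [G, rel])
  have hx2 : (G m).Reachable lk x2 := step hx1 (by simp [G, rel])
  rw [SimpleGraph.connected_iff_exists_forall_reachable]
  refine ⟨lk, fun u => ?_⟩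
  cases u with
  | L i => exact step hlk (by simp [G, rel])
  | R i => exact step hrk (by simp [G, rel])
  | lk => exact hlk
  | lk1 => exact hlk1
  | rk => exact hrk
  | rk1 => exact hrk1
  | F j => exact hF j
  | T j => exact hT j
  | F' j => exact step (hT j) (by simp [G, rel])
  | T' j => exact step (hF j) (by simp [G, rel])
  | x1 => exact hx1
  | x2 => exact hx2
  | x3 => exact step hx2 (by simp [G, rel])

lemma dist_le_ecc (u v : V m) : (GS m Sa Sb).dist u v ≤ ecc m Sa Sb u :=
  Finset.le_sup (Finset.mem_univ v)

lemma le_level_add_dist (u v : V m) : level u ≤ level v + (GS m Sa Sb).dist u v :=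
  SimpleGraph.Reachable.le_add_dist level_le_level_add_one_of_adj
    ((G_connected.mono le_sup_left).preconnected u v)

lemma four_le_ecc_of_four_le_level {u : V m} (h : 4 ≤ level u) : 4 ≤ ecc m Sa Sb u := by
  have : level u ≤ 0 + (GS m Sa Sb).dist u x3 := le_level_add_dist u x3
  exact (by omega : 4 ≤ (GS m Sa Sb).dist u x3).trans (dist_le_ecc u x3)

lemma four_le_ecc_of_level_le_two {u : V m} (h : level u ≤ 2) : 4 ≤ ecc m Sa Sb u := by
  let r₀ : V m := R ⟨0, Nat.two_pow_pos m⟩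
  have : 6 ≤ level u + (GS m Sa Sb).dist r₀ u := le_level_add_dist r₀ u
  rw [SimpleGraph.dist_comm] at this
  exact (by omega : 4 ≤ (GS m Sa Sb).dist u r₀).trans (dist_le_ecc u r₀)

theorem statement10_general (m : ℕ) (Sa Sb : Fin (2 ^ m) → Bool) :
    ∀ u : V m, (∀ i : Fin (2 ^ m), u ≠ L i) → 4 ≤ ecc m Sa Sb u := by
  intro u hu
  by_cases h : level u ≤ 2
  · exact four_le_ecc_of_level_le_two h
  · have := level_ne_three hu
    exact four_le_ecc_of_four_le_level (by omega)

theorem statement10 (m : ℕ) (hm : 1 ≤ m) (Sa Sb : Fin (2 ^ m) → Bool) :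
    ∀ u : V m, (∀ i : Fin (2 ^ m), u ≠ L i) → 4 ≤ ecc m Sa Sb u :=
  statement10_general m Sa Sb

end RadGadget
end

section
/- In the graph RA_{k,P}(S_a, S_b), for every 0 ≤ i ≤ k−1 and every vertex u ∈ V_a, one has d(ℓ′_i, u) ≤ 4P. -/
namespace RadApprox

/-- Hub vertices of `RA_{k,P}(S_a,S_b)`: two copies (indexed by `Bool`) of the
distinguished vertices of `G′`, together with the shared vertices `ℓ′_i`. -/
inductive Hub (m : ℕ) : Type
  | L : Bool → Fin (2 ^ m) → Hub m
  | R : Bool → Fin (2 ^ m) → Hub m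
  | R' : Bool → Fin (2 ^ m) → Hub m
  | lk : Bool → Hub m
  | lk1 : Bool → Hub m
  | rk : Bool → Hub m
  | rk1 : Bool → Hub m
  | F : Bool → Fin m → Hub m
  | T : Bool → Fin m → Hub m
  | F' : Bool → Fin m → Hub m
  | T' : Bool → Fin m → Hub m
  | L' : Fin (2 ^ m) → Hub m

/-- Segments (paths between hubs) of `RA_{k,P}(S_a,S_b)`; the first `Bool`
argument selects the copy of `G′`. -/
inductive Seg (m : ℕ) (Sa Sb : Fin (2 ^ m) → Bool) : Type
  | Llk : Bool → Fin (2 ^ m) → Seg m Sa Sb             -- ℓ_i – ℓ_k, length P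
  | Rrk : Bool → Fin (2 ^ m) → Seg m Sa Sb             -- r_i – r_k, length P
  | lklk1 : Bool → Seg m Sa Sb                          -- ℓ_k – ℓ_{k+1}, length 2P
  | rkrk1 : Bool → Seg m Sa Sb                          -- r_k – r_{k+1}, length 2P
  | lk1rk1 : Bool → Seg m Sa Sb                         -- edge ℓ_{k+1} – r_{k+1}
  | Lbit : Bool → Fin (2 ^ m) → Fin m → Seg m Sa Sb    -- ℓ_i – (f_j or t_j), length P
  | Rbit : Bool → Fin (2 ^ m) → Fin m → Seg m Sa Sb    -- r_i – (f'_j or t'_j), length P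
  | FT' : Bool → Fin m → Seg m Sa Sb                   -- edge f_j – t'_j
  | TF' : Bool → Fin m → Seg m Sa Sb                   -- edge t_j – f'_j
  | R'R : Bool → Fin (2 ^ m) → Seg m Sa Sb             -- r'_i – r_i, length P
  | L'L : Bool → Fin (2 ^ m) → Seg m Sa Sb             -- ℓ'_i – ℓ_{(i,c)}, length P
  | Slk1 : Bool → (i : Fin (2 ^ m)) → Sa i = true → Seg m Sa Sb
      -- ℓ_{(i,c)} – ℓ_{(k+1,c)}, length P (present iff S_a(i) = 1)
  | Srk1 : Bool → (i : Fin (2 ^ m)) → Sb i = true → Seg m Sa Sb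
      -- r_{(i,c)} – r_{(k+1,c)}, length P (present iff S_b(i) = 1)

open Hub Seg

/-- Endpoints of each segment. -/
def ends (m : ℕ) (Sa Sb : Fin (2 ^ m) → Bool) : Seg m Sa Sb → Hub m × Hub m
  | Llk c i => (L c i, lk c)
  | Rrk c i => (R c i, rk c)
  | lklk1 c => (lk c, lk1 c)
  | rkrk1 c => (rk c, rk1 c)
  | lk1rk1 c => (lk1 c, rk1 c)
  | Lbit c i j => (L c i, if Nat.testBit i.val j.val then T c j else F c j)
  | Rbit c i j => (R c i, if Nat.testBit i.val j.val then T' c j else F' c j)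
  | FT' c j => (F c j, T' c j)
  | TF' c j => (T c j, F' c j)
  | R'R c i => (R' c i, R c i)
  | L'L c i => (L' i, L c i)
  | Slk1 c i _ => (L c i, lk1 c)
  | Srk1 c i _ => (R c i, rk1 c)

/-- Length of each segment. -/
def len (m P : ℕ) (Sa Sb : Fin (2 ^ m) → Bool) : Seg m Sa Sb → ℕ
  | lk1rk1 _ => 1
  | FT' _ _ => 1
  | TF' _ _ => 1
  | lklk1 _ => 2 * P
  | rkrk1 _ => 2 * P
  | _ => P

/-- Vertices of `RA_{k,P}(S_a,S_b)`. -/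
abbrev V (m P : ℕ) (Sa Sb : Fin (2 ^ m) → Bool) : Type :=
  Hub m ⊕ (s : Seg m Sa Sb) × Fin (len m P Sa Sb s - 1)

/-- The graph `RA_{k,P}(S_a, S_b)`. -/
def RA (m P : ℕ) (Sa Sb : Fin (2 ^ m) → Bool) : SimpleGraph (V m P Sa Sb) :=
  segGraph (ends m Sa Sb) (len m P Sa Sb)

/-- Membership in `V_a`: the vertices `L′`, both copies of
`L ∪ F ∪ T ∪ {ℓ_k, ℓ_{k+1}}`, and all internal vertices of paths joining two
such vertices. -/
def inVa {m P : ℕ} {Sa Sb : Fin (2 ^ m) → Bool} : V m P Sa Sb → Prop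
  | Sum.inl (L' _) => True
  | Sum.inl (L _ _) => True
  | Sum.inl (F _ _) => True
  | Sum.inl (T _ _) => True
  | Sum.inl (lk _) => True
  | Sum.inl (lk1 _) => True
  | Sum.inr ⟨Llk _ _, _⟩ => True
  | Sum.inr ⟨lklk1 _, _⟩ => True
  | Sum.inr ⟨Lbit _ _ _, _⟩ => True
  | Sum.inr ⟨L'L _ _, _⟩ => True
  | Sum.inr ⟨Slk1 _ _ _, _⟩ => True
  | _ => False

/-! ### Auxiliary machinery -/

/-- `Near G u v n`: there is a walk from `u` to `v` of length at most `n`. -/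
def Near {α : Type*} (G : SimpleGraph α) (u v : α) (n : ℕ) : Prop :=
  ∃ p : G.Walk u v, p.length ≤ n

lemma near_of_adj {α : Type*} {G : SimpleGraph α} {u v : α} (h : G.Adj u v) :
    Near G u v 1 := ⟨h.toWalk, le_refl _⟩

lemma Near.trans {α : Type*} {G : SimpleGraph α} {u v w : α} {a b : ℕ}
    (h1 : Near G u v a) (h2 : Near G v w b) : Near G u w (a + b) := by
  obtain ⟨p, hp⟩ := h1; obtain ⟨q, hq⟩ := h2
  exact ⟨p.append q, by rw [SimpleGraph.Walk.length_append]; omega⟩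

lemma Near.symm {α : Type*} {G : SimpleGraph α} {u v : α} {n : ℕ}
    (h : Near G u v n) : Near G v u n := by
  obtain ⟨p, hp⟩ := h
  exact ⟨p.reverse, by simpa using hp⟩

lemma Near.mono {α : Type*} {G : SimpleGraph α} {u v : α} {n n' : ℕ}
    (hn : n ≤ n') (h : Near G u v n) : Near G u v n' := by
  obtain ⟨p, hp⟩ := h; exact ⟨p, hp.trans hn⟩

lemma Near.dist_le {α : Type*} {G : SimpleGraph α} {u v : α} {n : ℕ}
    (h : Near G u v n) : G.dist u v ≤ n := by
  obtain ⟨p, hp⟩ := h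
  exact (SimpleGraph.dist_le p).trans hp

section SegLemmas

variable {Hub Seg : Type} (ends : Seg → Hub × Hub) (len : Seg → ℕ)

lemma adj_left (s : Seg) (t : Fin (len s - 1)) (h : (t : ℕ) = 0) :
    (segGraph ends len).Adj (Sum.inl (ends s).1) (Sum.inr ⟨s, t⟩) := by
  simp only [segGraph, SimpleGraph.fromRel_adj]
  exact ⟨by simp, Or.inl (Or.inl ⟨by trivial, h⟩)⟩

lemma adj_right (s : Seg) (t : Fin (len s - 1)) (h : (t : ℕ) + 2 = len s) :
    (segGraph ends len).Adj (Sum.inl (ends s).2) (Sum.inr ⟨s, t⟩) := by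
  simp only [segGraph, SimpleGraph.fromRel_adj]
  exact ⟨by simp, Or.inl (Or.inr ⟨by trivial, h⟩)⟩

lemma adj_inr (s : Seg) (t t' : Fin (len s - 1)) (h : (t : ℕ) + 1 = t') :
    (segGraph ends len).Adj (Sum.inr ⟨s, t⟩) (Sum.inr ⟨s, t'⟩) := by
  simp only [segGraph, SimpleGraph.fromRel_adj]
  refine ⟨?_, Or.inl ⟨by trivial, Or.inl h⟩⟩
  intro he
  have h2 := Sum.inr.inj he
  have h3 : t = t' := eq_of_heq (Sigma.mk.inj_iff.mp h2).2
  have hv : (t : ℕ) = (t' : ℕ) := congrArg Fin.val h3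
  omega

lemma adj_ends (s : Seg) (h1 : len s = 1) (hne : (ends s).1 ≠ (ends s).2) :
    (segGraph ends len).Adj (Sum.inl (ends s).1) (Sum.inl (ends s).2) := by
  simp only [segGraph, SimpleGraph.fromRel_adj]
  exact ⟨by simpa using hne, Or.inl ⟨s, h1, by trivial⟩⟩

lemma lemA_aux (s : Seg) :
    ∀ (n : ℕ) (t : Fin (len s - 1)), (t : ℕ) = n →
      Near (segGraph ends len) (Sum.inl (ends s).1) (Sum.inr ⟨s, t⟩) (n + 1) := by
  intro n
  induction n with
  | zero => intro t ht; exact near_of_adj (adj_left ends len s t ht)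
  | succ n ih =>
    intro t ht
    have hlt : n < len s - 1 := by have := t.isLt; omega
    have h1 := ih ⟨n, hlt⟩ rfl
    have h2 : (segGraph ends len).Adj (Sum.inr ⟨s, ⟨n, hlt⟩⟩) (Sum.inr ⟨s, t⟩) :=
      adj_inr ends len s _ t (by show n + 1 = (t : ℕ); omega)
    exact h1.trans (near_of_adj h2)

lemma lemC_aux (s : Seg) :
    ∀ (n : ℕ) (t : Fin (len s - 1)), (t : ℕ) + n + 2 = len s →
      Near (segGraph ends len) (Sum.inl (ends s).2) (Sum.inr ⟨s, t⟩) (n + 1) := by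
  intro n
  induction n with
  | zero => intro t ht; exact near_of_adj (adj_right ends len s t (by omega))
  | succ n ih =>
    intro t ht
    have hlt : (t : ℕ) + 1 < len s - 1 := by omega
    have h1 := ih ⟨(t : ℕ) + 1, hlt⟩ (by show (t : ℕ) + 1 + n + 2 = len s; omega)
    have h2 := adj_inr ends len s t ⟨(t : ℕ) + 1, hlt⟩ rfl
    exact h1.trans (near_of_adj h2.symm)

lemma lemB (s : Seg) (h1 : 1 ≤ len s) (hne : (ends s).1 ≠ (ends s).2) :
    Near (segGraph ends len) (Sum.inl (ends s).1) (Sum.inl (ends s).2) (len s) := by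
  rcases Nat.lt_or_ge (len s) 2 with h | h
  · have hl : len s = 1 := by omega
    exact Near.mono (by omega) (near_of_adj (adj_ends ends len s hl hne))
  · have hlt : len s - 2 < len s - 1 := by omega
    have hA := lemA_aux ends len s (len s - 2) ⟨len s - 2, hlt⟩ rfl
    have h2 := adj_right ends len s ⟨len s - 2, hlt⟩
      (by show len s - 2 + 2 = len s; omega)
    exact Near.mono (by omega) (hA.trans (near_of_adj h2.symm))

end SegLemmas

theorem statement12 (m P : ℕ) (hm : 1 ≤ m) (hP : 1 ≤ P)
    (Sa Sb : Fin (2 ^ m) → Bool) :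
    ∀ (i : Fin (2 ^ m)) (u : V m P Sa Sb), inVa u →
      (RA m P Sa Sb).dist (Sum.inl (L' i)) u ≤ 4 * P := by
  intro i u hu
  have hRA : RA m P Sa Sb = segGraph (ends m Sa Sb) (len m P Sa Sb) := rfl
  set G := segGraph (ends m Sa Sb) (len m P Sa Sb) with hG
  -- basic hub facts
  have hL : ∀ c : Bool, Near G (Sum.inl (L' i)) (Sum.inl (L c i)) P := by
    intro c
    exact lemB (ends m Sa Sb) (len m P Sa Sb) (Seg.L'L c i) hP (by simp [ends])
  have hlk : ∀ c : Bool, Near G (Sum.inl (L' i)) (Sum.inl (lk c)) (2 * P) := by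
    intro c
    have hlen : len m P Sa Sb (Seg.Llk c i) = P := rfl
    have h2 := lemB (ends m Sa Sb) (len m P Sa Sb) (Seg.Llk c i) hP (by simp [ends])
    exact Near.mono (by omega) ((hL c).trans h2)
  have hL3 : ∀ (c : Bool) (i' : Fin (2 ^ m)),
      Near G (Sum.inl (L' i)) (Sum.inl (L c i')) (3 * P) := by
    intro c i'
    have hlen : len m P Sa Sb (Seg.Llk c i') = P := rfl
    have h2 := lemB (ends m Sa Sb) (len m P Sa Sb) (Seg.Llk c i') hP (by simp [ends])
    exact Near.mono (by omega) ((hlk c).trans h2.symm)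
  have hL'4 : ∀ i' : Fin (2 ^ m),
      Near G (Sum.inl (L' i)) (Sum.inl (L' i')) (4 * P) := by
    intro i'
    have hlen : len m P Sa Sb (Seg.L'L true i') = P := rfl
    have h2 := lemB (ends m Sa Sb) (len m P Sa Sb) (Seg.L'L true i') hP (by simp [ends])
    exact Near.mono (by omega) ((hL3 true i').trans h2.symm)
  have hlk1 : ∀ c : Bool, Near G (Sum.inl (L' i)) (Sum.inl (lk1 c)) (4 * P) := by
    intro c
    have h2 := lemB (ends m Sa Sb) (len m P Sa Sb) (Seg.lklk1 c)
      (by show 1 ≤ 2 * P; omega) (by simp [ends])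
    have hlen : len m P Sa Sb (Seg.lklk1 c) = 2 * P := rfl
    exact Near.mono (by omega) ((hlk c).trans h2)
  have hbit : ∀ (c : Bool) (i' : Fin (2 ^ m)) (j : Fin m) (b : Bool),
      Nat.testBit i'.val j.val = b →
      Near G (Sum.inl (L' i)) (Sum.inl (if b then T c j else F c j)) (4 * P) := by
    intro c i' j b hb
    have h2 := lemB (ends m Sa Sb) (len m P Sa Sb) (Seg.Lbit c i' j) hP
      (by simp only [ends]; split <;> simp)
    have h3 : (ends m Sa Sb (Seg.Lbit c i' j)).2 = (if b then T c j else F c j) := by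
      simp only [ends, hb]
    rw [h3] at h2
    have hlen : len m P Sa Sb (Seg.Lbit c i' j) = P := rfl
    exact Near.mono (by omega) ((hL3 c i').trans h2)
  -- the main case analysis
  rw [hRA]
  apply Near.dist_le
  show Near G (Sum.inl (L' i)) u (4 * P)
  rcases u with h | ⟨s, t⟩
  · cases h with
    | L c i' => exact Near.mono (by omega) (hL3 c i')
    | L' i' => exact hL'4 i'
    | lk c => exact Near.mono (by omega) (hlk c)
    | lk1 c => exact hlk1 c
    | F c j =>
      exact hbit c ⟨0, by positivity⟩ j false (Nat.zero_testBit _)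
    | T c j =>
      exact hbit c ⟨2 ^ (j : ℕ), Nat.pow_lt_pow_right one_lt_two j.isLt⟩ j true
        Nat.testBit_two_pow_self
    | R c i' => simp [inVa] at hu
    | R' c i' => simp [inVa] at hu
    | rk c => simp [inVa] at hu
    | rk1 c => simp [inVa] at hu
    | F' c j => simp [inVa] at hu
    | T' c j => simp [inVa] at hu
  · cases s with
    | Llk c i' =>
      have hlen : len m P Sa Sb (Seg.Llk c i') = P := rfl
      have ht := t.isLt
      have h2 := lemC_aux (ends m Sa Sb) (len m P Sa Sb) (Seg.Llk c i')
        (P - 2 - (t : ℕ)) t (by omega)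
      exact Near.mono (by omega) ((hlk c).trans h2)
    | lklk1 c =>
      have hlen : len m P Sa Sb (Seg.lklk1 c) = 2 * P := rfl
      have ht := t.isLt
      have h2 := lemA_aux (ends m Sa Sb) (len m P Sa Sb) (Seg.lklk1 c) (t : ℕ) t rfl
      exact Near.mono (by omega) ((hlk c).trans h2)
    | Lbit c i' j =>
      have hlen : len m P Sa Sb (Seg.Lbit c i' j) = P := rfl
      have ht := t.isLt
      have h2 := lemA_aux (ends m Sa Sb) (len m P Sa Sb) (Seg.Lbit c i' j) (t : ℕ) t rfl
      exact Near.mono (by omega) ((hL3 c i').trans h2)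
    | L'L c i' =>
      have hlen : len m P Sa Sb (Seg.L'L c i') = P := rfl
      have ht := t.isLt
      have h2 := lemC_aux (ends m Sa Sb) (len m P Sa Sb) (Seg.L'L c i')
        (P - 2 - (t : ℕ)) t (by omega)
      exact Near.mono (by omega) ((hL3 c i').trans h2)
    | Slk1 c i' hS =>
      have hlen : len m P Sa Sb (Seg.Slk1 c i' hS) = P := rfl
      have ht := t.isLt
      have h2 := lemA_aux (ends m Sa Sb) (len m P Sa Sb) (Seg.Slk1 c i' hS) (t : ℕ) t rfl
      exact Near.mono (by omega) ((hL3 c i').trans h2)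
    | Rrk c i' => simp [inVa] at hu
    | rkrk1 c => simp [inVa] at hu
    | lk1rk1 c => simp [inVa] at hu
    | Rbit c i' j => simp [inVa] at hu
    | FT' c j => simp [inVa] at hu
    | TF' c j => simp [inVa] at hu
    | R'R c i' => simp [inVa] at hu
    | Srk1 c i' hS => simp [inVa] at hu

end RadApprox
end

section
/- In the graph RA_{k,P}(S_a, S_b), if 0 ≤ i ≤ k−1 is such that S_a(i) = 0 or S_b(i) = 0, then d(ℓ′_i, r′_{(i,1)}) ≥ 6P + 1 and d(ℓ′_i, r′_{(i,2)}) ≥ 6P + 1. -/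
namespace RadApprox

open Hub Seg

/-- Potential (distance lower bound from `ℓ′_i`) on hub vertices. -/
def phiHub (m P : ℕ) (Sa : Fin (2 ^ m) → Bool) (i : Fin (2 ^ m)) : Hub m → ℕ
  | L _ i' => if i' = i then P else 3 * P
  | R _ i' => if i' = i then 5 * P + 1 else 3 * P + 1
  | R' _ i' => if i' = i then 6 * P + 1 else 4 * P + 1
  | lk _ => 2 * P
  | lk1 _ => if Sa i then 2 * P else 4 * P
  | rk _ => 4 * P + 1
  | rk1 _ => (if Sa i then 2 * P else 4 * P) + 1
  | F _ j => if Nat.testBit i.val j.val then 4 * P else 2 * P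
  | T _ j => if Nat.testBit i.val j.val then 2 * P else 4 * P
  | F' _ j => if Nat.testBit i.val j.val then 2 * P + 1 else 4 * P + 1
  | T' _ j => if Nat.testBit i.val j.val then 4 * P + 1 else 2 * P + 1
  | L' i' => if i' = i then 0 else 4 * P

/-- Potential on all vertices. -/
def phi (m P : ℕ) (Sa Sb : Fin (2 ^ m) → Bool) (i : Fin (2 ^ m)) : V m P Sa Sb → ℕ
  | Sum.inl x => phiHub m P Sa i x
  | Sum.inr ⟨s, t⟩ =>
      min (phiHub m P Sa i (ends m Sa Sb s).1 + (t : ℕ) + 1)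
        (phiHub m P Sa i (ends m Sa Sb s).2 + (len m P Sa Sb s - 1 - (t : ℕ)))

/-- Across every segment, the potentials of the two endpoints differ by at
most the length of the segment. -/
lemma phiHub_ends (m P : ℕ) (Sa Sb : Fin (2 ^ m) → Bool) (i : Fin (2 ^ m))
    (h : Sa i = false ∨ Sb i = false) (s : Seg m Sa Sb) :
    phiHub m P Sa i (ends m Sa Sb s).1 ≤ phiHub m P Sa i (ends m Sa Sb s).2 + len m P Sa Sb s ∧
    phiHub m P Sa i (ends m Sa Sb s).2 ≤ phiHub m P Sa i (ends m Sa Sb s).1 + len m P Sa Sb s := by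
  cases s with
  | Llk c i' =>
      simp only [ends, len, phiHub]; split_ifs <;> omega
  | Rrk c i' =>
      simp only [ends, len, phiHub]; split_ifs <;> omega
  | lklk1 c =>
      simp only [ends, len, phiHub]; split_ifs <;> omega
  | rkrk1 c =>
      simp only [ends, len, phiHub]; split_ifs <;> omega
  | lk1rk1 c =>
      simp only [ends, len, phiHub]; split_ifs <;> omega
  | Lbit c i' j =>
      by_cases hi : i' = i
      · subst hi
        cases hb : Nat.testBit i'.val j.val <;>
          simp only [ends, len, phiHub, hb, Bool.false_eq_true, reduceIte] <;>
          first | omega | (split_ifs <;> omega)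
      · cases hb : Nat.testBit i'.val j.val <;>
          simp only [ends, len, phiHub, hb, Bool.false_eq_true, reduceIte] <;>
          first | omega | (split_ifs <;> omega)
  | Rbit c i' j =>
      by_cases hi : i' = i
      · subst hi
        cases hb : Nat.testBit i'.val j.val <;>
          simp only [ends, len, phiHub, hb, Bool.false_eq_true, reduceIte] <;>
          first | omega | (split_ifs <;> omega)
      · cases hb : Nat.testBit i'.val j.val <;>
          simp only [ends, len, phiHub, hb, Bool.false_eq_true, reduceIte] <;>
          first | omega | (split_ifs <;> omega)
  | FT' c j =>
      simp only [ends, len, phiHub]; split_ifs <;> omega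
  | TF' c j =>
      simp only [ends, len, phiHub]; split_ifs <;> omega
  | R'R c i' =>
      simp only [ends, len, phiHub]; split_ifs <;> omega
  | L'L c i' =>
      simp only [ends, len, phiHub]; split_ifs <;> omega
  | Slk1 c i' ha =>
      by_cases hi : i' = i
      · subst hi
        simp only [ends, len, phiHub, ha, if_pos rfl, if_true]; omega
      · simp only [ends, len, phiHub, if_neg hi]; split_ifs <;> omega
  | Srk1 c i' hb =>
      by_cases hi : i' = i
      · subst hi
        have hsa : Sa i' = false := by
          rcases h with h | h
          · exact h
          · rw [h] at hb; exact absurd hb (by simp)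
        simp only [ends, len, phiHub, hsa, if_pos rfl, Bool.false_eq_true, reduceIte]
        omega
      · simp only [ends, len, phiHub, if_neg hi]; split_ifs <;> omega

/-- Helper: hub-to-hub edge case. -/
lemma lip_hub_hub (m P : ℕ) (Sa Sb : Fin (2 ^ m) → Bool) (i : Fin (2 ^ m))
    (h : Sa i = false ∨ Sb i = false) (x y : Hub m)
    (hr : ∃ s, len m P Sa Sb s = 1 ∧ ends m Sa Sb s = (x, y)) :
    phiHub m P Sa i y ≤ phiHub m P Sa i x + 1 ∧
    phiHub m P Sa i x ≤ phiHub m P Sa i y + 1 := by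
  obtain ⟨s, hl, he⟩ := hr
  have hk := phiHub_ends m P Sa Sb i h s
  have hx : (ends m Sa Sb s).1 = x := by rw [he]
  have hy : (ends m Sa Sb s).2 = y := by rw [he]
  rw [hx, hy, hl] at hk
  omega

/-- Helper: hub-to-internal edge case. -/
lemma lip_hub_int (m P : ℕ) (Sa Sb : Fin (2 ^ m) → Bool) (i : Fin (2 ^ m))
    (h : Sa i = false ∨ Sb i = false) (x : Hub m) (s : Seg m Sa Sb)
    (t : Fin (len m P Sa Sb s - 1))
    (hr : ((ends m Sa Sb s).1 = x ∧ (t : ℕ) = 0) ∨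
      ((ends m Sa Sb s).2 = x ∧ (t : ℕ) + 2 = len m P Sa Sb s)) :
    phi m P Sa Sb i (Sum.inr ⟨s, t⟩) ≤ phiHub m P Sa i x + 1 ∧
    phiHub m P Sa i x ≤ phi m P Sa Sb i (Sum.inr ⟨s, t⟩) + 1 := by
  have hk := phiHub_ends m P Sa Sb i h s
  have ht := t.isLt
  simp only [phi]
  rcases hr with ⟨hx, ht0⟩ | ⟨hx, htn⟩ <;> subst hx <;> omega

/-- Helper: internal-to-internal edge case. -/
lemma lip_int_int (m P : ℕ) (Sa Sb : Fin (2 ^ m) → Bool) (i : Fin (2 ^ m))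
    (s : Seg m Sa Sb) (t t' : Fin (len m P Sa Sb s - 1))
    (hts : (t : ℕ) + 1 = (t' : ℕ) ∨ (t' : ℕ) + 1 = (t : ℕ)) :
    phi m P Sa Sb i (Sum.inr ⟨s, t'⟩) ≤ phi m P Sa Sb i (Sum.inr ⟨s, t⟩) + 1 := by
  have ht := t.isLt
  have ht' := t'.isLt
  simp only [phi]
  omega

/-- The potential changes by at most 1 along any edge. -/
lemma phi_lip (m P : ℕ) (Sa Sb : Fin (2 ^ m) → Bool) (i : Fin (2 ^ m))
    (h : Sa i = false ∨ Sb i = false) :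
    ∀ u v : V m P Sa Sb, (RA m P Sa Sb).Adj u v →
      phi m P Sa Sb i v ≤ phi m P Sa Sb i u + 1 := by
  intro u v hadj
  rw [RA, segGraph, SimpleGraph.fromRel_adj] at hadj
  obtain ⟨-, hrel⟩ := hadj
  rcases u with x | ⟨s, t⟩ <;> rcases v with y | ⟨s', t'⟩
  · rcases hrel with hr | hr
    · exact (lip_hub_hub m P Sa Sb i h x y hr).1
    · exact (lip_hub_hub m P Sa Sb i h y x hr).2
  · rcases hrel with hr | hr
    · exact (lip_hub_int m P Sa Sb i h x s' t' hr).1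
    · exact (lip_hub_int m P Sa Sb i h x s' t' hr).1
  · rcases hrel with hr | hr
    · exact (lip_hub_int m P Sa Sb i h y s t hr).2
    · exact (lip_hub_int m P Sa Sb i h y s t hr).2
  · rcases hrel with ⟨rfl, hts⟩ | ⟨heq, hts⟩
    · exact lip_int_int m P Sa Sb i s t t' hts
    · subst heq
      exact lip_int_int m P Sa Sb i _ t t' (Or.symm hts)

/-- Potential change over a walk is at most the length. -/
lemma phi_walk {W : Type} {G : SimpleGraph W} {f : W → ℕ}
    (hf : ∀ u v, G.Adj u v → f v ≤ f u + 1) :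
    ∀ {u v : W} (p : G.Walk u v), f v ≤ f u + p.length := by
  intro u v p
  induction p with
  | nil => simp
  | cons ha p ih =>
      have := hf _ _ ha
      simp only [SimpleGraph.Walk.length_cons]
      omega

/-- Endpoints of any non-degenerate segment are reachable. -/
lemma seg_reach {H S : Type} (e : S → H × H) (l : S → ℕ) (s : S) (hl : 1 ≤ l s) :
    (segGraph e l).Reachable (Sum.inl (e s).1) (Sum.inl (e s).2) := by
  rcases Nat.lt_or_ge (l s) 2 with h2 | h2
  · -- length 1 : single edge (or equal endpoints)
    have hl1 : l s = 1 := by omega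
    by_cases hxy : (e s).1 = (e s).2
    · rw [hxy]
    · apply SimpleGraph.Adj.reachable
      rw [segGraph, SimpleGraph.fromRel_adj]
      refine ⟨by simpa using hxy, Or.inl ?_⟩
      exact ⟨s, hl1, rfl⟩
  · have main : ∀ t : ℕ, ∀ ht : t < l s - 1,
        (segGraph e l).Reachable (Sum.inl (e s).1) (Sum.inr ⟨s, ⟨t, ht⟩⟩) := by
      intro t
      induction t with
      | zero =>
          intro ht
          apply SimpleGraph.Adj.reachable
          rw [segGraph, SimpleGraph.fromRel_adj]
          exact ⟨by simp, Or.inl (Or.inl ⟨rfl, rfl⟩)⟩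
      | succ n ih =>
          intro ht
          have hn : n < l s - 1 := by omega
          refine (ih hn).trans (SimpleGraph.Adj.reachable ?_)
          rw [segGraph, SimpleGraph.fromRel_adj]
          refine ⟨?_, Or.inl ⟨rfl, Or.inl rfl⟩⟩
          simp only [ne_eq, Sum.inr.injEq, Sigma.mk.inj_iff, heq_eq_eq, Fin.mk.injEq,
            true_and]
          omega
    have hend : l s - 2 < l s - 1 := by omega
    refine (main (l s - 2) hend).trans (SimpleGraph.Adj.reachable ?_)
    rw [segGraph, SimpleGraph.fromRel_adj]
    refine ⟨by simp, Or.inl (Or.inr ⟨rfl, ?_⟩)⟩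
    show (l s - 2) + 2 = l s
    omega

theorem statement13 (m P : ℕ) (hm : 1 ≤ m) (hP : 1 ≤ P)
    (Sa Sb : Fin (2 ^ m) → Bool) (i : Fin (2 ^ m))
    (h : Sa i = false ∨ Sb i = false) :
    ∀ c : Bool, 6 * P + 1 ≤ (RA m P Sa Sb).dist (Sum.inl (L' i)) (Sum.inl (R' c i)) := by
  intro c
  have hlen : ∀ s : Seg m Sa Sb, 1 ≤ len m P Sa Sb s := by
    intro s; cases s <;> simp [len] <;> omega
  have r1 := seg_reach (ends m Sa Sb) (len m P Sa Sb) (L'L c i) (hlen _)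
  have r2 := seg_reach (ends m Sa Sb) (len m P Sa Sb) (Llk c i) (hlen _)
  have r3 := seg_reach (ends m Sa Sb) (len m P Sa Sb) (lklk1 c) (hlen _)
  have r4 := seg_reach (ends m Sa Sb) (len m P Sa Sb) (lk1rk1 c) (hlen _)
  have r5 := seg_reach (ends m Sa Sb) (len m P Sa Sb) (rkrk1 c) (hlen _)
  have r6 := seg_reach (ends m Sa Sb) (len m P Sa Sb) (Rrk c i) (hlen _)
  have r7 := seg_reach (ends m Sa Sb) (len m P Sa Sb) (R'R c i) (hlen _)
  simp only [ends] at r1 r2 r3 r4 r5 r6 r7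
  have hreach : (RA m P Sa Sb).Reachable (Sum.inl (L' i)) (Sum.inl (R' c i)) := by
    rw [RA]
    exact ((((((r1.trans r2).trans r3).trans r4).trans r5.symm).trans r6.symm).trans r7.symm)
  obtain ⟨p, hp⟩ := hreach.exists_walk_length_eq_dist
  have hb := phi_walk (phi_lip m P Sa Sb i h) p
  have h1 : phi m P Sa Sb i (Sum.inl (L' i)) = 0 := by simp [phi, phiHub]
  have h2 : phi m P Sa Sb i (Sum.inl (R' c i)) = 6 * P + 1 := by simp [phi, phiHub]
  rw [h1, h2, hp] at hb
  omega

end RadApprox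
end
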